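/- arXiv:2309.13765 — 7 statements merged into one kernel-verified Lean document; each statement's English description precedes it below -/
import Mathlib

section
/- There exists a unique real number α < 0 such that (3/2)^α = 1 + (3/8)·α, and this α lies in the open interval (−1, 0). Moreover, the set of all real solutions x of the equation (3/2)^x = 1 + (3/8)·x is exactly {α, 0}. -/
open Real Set

noncomputable def f9 (x : ℝ) : ℝ := Real.exp (Real.log (3/2) * x) - (1 + 3/8 * x)

lemma f9_rw (x : ℝ) : (3/2 : ℝ) ^ x = 1 + (3/8) * x ↔ f9 x = 0 := by
  rw [Real.rpow_def_of_pos (by norm_num : (0:ℝ) < 3/2)]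
  unfold f9
  constructor <;> intro h <;> linarith

lemma f9_cont : Continuous f9 := by
  unfold f9; continuity

lemma f9_strict_conv {x y t : ℝ} (hxy : x < y) (ht0 : 0 < t) (ht1 : t < 1) :
    f9 (t * x + (1 - t) * y) < t * f9 x + (1 - t) * f9 y := by
  have hc : 0 < Real.log (3/2) := Real.log_pos (by norm_num)
  have key := strictConvexOn_exp.2 (mem_univ (Real.log (3/2) * x))
    (mem_univ (Real.log (3/2) * y))
    (by intro h; exact absurd (mul_left_cancel₀ (ne_of_gt hc) h) (ne_of_lt hxy))
    ht0 (show (0:ℝ) < 1 - t by linarith) (by ring)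
  simp only [smul_eq_mul] at key
  rw [show t * (Real.log (3/2) * x) + (1 - t) * (Real.log (3/2) * y)
      = Real.log (3/2) * (t * x + (1 - t) * y) from by ring] at key
  unfold f9
  nlinarith [key]

lemma f9_mid {u v w : ℝ} (huv : u < v) (hvw : v < w) (hu : f9 u = 0) (hw : f9 w = 0) :
    f9 v < 0 := by
  set t : ℝ := (w - v) / (w - u) with ht
  have hwu : (0:ℝ) < w - u := by linarith
  have ht0 : 0 < t := div_pos (by linarith) hwu
  have ht1 : t < 1 := (div_lt_one hwu).mpr (by linarith)
  have hv : v = t * u + (1 - t) * w := by rw [ht, div_mul_eq_mul_div, one_sub_div hwu.ne', div_mul_eq_mul_div, ← add_div, eq_div_iff hwu.ne']; ring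
  have := f9_strict_conv (show u < w by linarith) ht0 ht1
  rw [← hv, hu, hw] at this
  linarith

lemma f9_m1 : 0 < f9 (-1) := by
  unfold f9
  have : Real.exp (Real.log (3/2) * (-1)) = 2/3 := by
    rw [mul_neg_one, Real.exp_neg, Real.exp_log (by norm_num)]
    norm_num
  rw [this]; norm_num

lemma f9_mq : f9 (-(1/4)) < 0 := by
  unfold f9
  have h4 : Real.exp (Real.log (3/2) * (-(1/4))) ^ (4:ℕ) = 2/3 := by
    rw [← Real.exp_nat_mul]
    have : (4:ℕ) * (Real.log (3/2) * (-(1/4))) = -Real.log (3/2) := by push_cast; ring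
    rw [this, Real.exp_neg, Real.exp_log (by norm_num)]
    norm_num
  have hlt : Real.exp (Real.log (3/2) * (-(1/4))) < 29/32 := by
    have := (pow_lt_pow_iff_left₀ (Real.exp_nonneg _) (by norm_num : (0:ℝ) ≤ 29/32)
      (by norm_num : (4:ℕ) ≠ 0)).mp (by rw [h4]; norm_num)
    exact this
  linarith

theorem stmt_9 :
    ∃ α : ℝ, α ∈ Set.Ioo (-1 : ℝ) 0 ∧
      (3/2 : ℝ) ^ α = 1 + (3/8) * α ∧
      (∀ β : ℝ, β < 0 → (3/2 : ℝ) ^ β = 1 + (3/8) * β → β = α) ∧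
      {x : ℝ | (3/2 : ℝ) ^ x = 1 + (3/8) * x} = {α, 0} := by
  -- find the root by IVT
  have hIVT : (0:ℝ) ∈ f9 '' Set.Ioo (-1 : ℝ) (-(1/4)) := by
    apply intermediate_value_Ioo' (by norm_num) f9_cont.continuousOn
    exact ⟨f9_mq, f9_m1⟩
  obtain ⟨α, hαmem, hαroot⟩ := hIVT
  have hα1 : -1 < α := hαmem.1
  have hα0 : α < 0 := lt_trans hαmem.2 (by norm_num)
  have hf0 : f9 0 = 0 := by unfold f9; simp
  -- any root is α or 0
  have hroots : ∀ x : ℝ, f9 x = 0 → x = α ∨ x = 0 := by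
    intro x hx
    rcases lt_trichotomy x α with h | h | h
    · exact absurd hαroot (ne_of_lt (f9_mid h hα0 hx hf0))
    · exact Or.inl h
    · rcases lt_trichotomy x 0 with h' | h' | h'
      · exact absurd hx (ne_of_lt (f9_mid h h' hαroot hf0))
      · exact Or.inr h'
      · exact absurd hf0 (ne_of_lt (f9_mid hα0 h' hαroot hx))
  refine ⟨α, ⟨hα1, hα0⟩, (f9_rw α).mpr hαroot, ?_, ?_⟩
  · intro β hβ hβeq
    rcases hroots β ((f9_rw β).mp hβeq) with h | h
    · exact h
    · exact absurd h (ne_of_lt hβ)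
  · ext x
    simp only [Set.mem_setOf_eq, Set.mem_insert_iff, Set.mem_singleton_iff, f9_rw]
    constructor
    · exact hroots x
    · rintro (rfl | rfl)
      · exact hαroot
      · exact hf0
end

section
/- Let φ : ℕ → ℝ with φ 0 = 0, suppose the power series Φ(x) = ∑_{n≥1} φ n · xⁿ converges for all x ∈ (0,1), and suppose that for every x ∈ (0,1), 2·∫_{x²}^{x} Φ(t) dt = (x − x²)·Φ(x). Then for every n ≥ 1, φ(2n)/2 = ∑_{k=n}^{2n} φ(k)/(k+1) and φ(2n+1)/2 = ∑_{k=n+1}^{2n+1} φ(k)/(k+1). -/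
open Set MeasureTheory
open scoped ENNReal NNReal

noncomputable def Acoef (φ : ℕ → ℝ) : ℕ → ℝ
  | 0 => 0
  | n+1 => 2 * φ n / ((n : ℝ) + 1)

noncomputable def Bcoef (φ : ℕ → ℝ) : ℕ → ℝ :=
  fun m => if m % 2 = 0 ∧ m ≠ 0 then 2 * φ (m / 2 - 1) / ((m / 2 : ℕ) : ℝ) else 0

noncomputable def Ccoef (φ : ℕ → ℝ) : ℕ → ℝ
  | 0 => 0
  | n+1 => φ n

noncomputable def Dcoef (φ : ℕ → ℝ) : ℕ → ℝ
  | 0 => 0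
  | 1 => 0
  | n+2 => φ n

noncomputable def gcoef (φ : ℕ → ℝ) : ℕ → ℝ :=
  fun m => Acoef φ m - Bcoef φ m - Ccoef φ m + Dcoef φ m

lemma Acoef_succ (φ : ℕ → ℝ) (n : ℕ) : Acoef φ (n+1) = 2 * φ n / ((n : ℝ) + 1) := rfl
lemma Ccoef_succ (φ : ℕ → ℝ) (n : ℕ) : Ccoef φ (n+1) = φ n := rfl
lemma Dcoef_succ (φ : ℕ → ℝ) (n : ℕ) : Dcoef φ (n+2) = φ n := rfl

lemma Bcoef_even (φ : ℕ → ℝ) (n : ℕ) : Bcoef φ (2*n+2) = 2 * φ n / ((n : ℝ) + 1) := by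
  have h1 : (2*n+2) % 2 = 0 ∧ 2*n+2 ≠ 0 := ⟨by omega, by omega⟩
  have h2 : (2*n+2)/2 - 1 = n := by omega
  have h3 : (2*n+2)/2 = n+1 := by omega
  simp only [Bcoef, if_pos h1, h2, h3]
  push_cast; ring

lemma Bcoef_not (φ : ℕ → ℝ) (m : ℕ) (h : ¬(m % 2 = 0 ∧ m ≠ 0)) : Bcoef φ m = 0 := if_neg h

lemma absSummable (φ : ℕ → ℝ)
    (hconv : ∀ x ∈ Set.Ioo (0 : ℝ) 1, Summable fun n => φ n * x ^ n) :
    ∀ x ∈ Set.Ioo (0 : ℝ) 1, Summable fun n => |φ n| * x ^ n := by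
  intro x hx
  obtain ⟨hx0, hx1⟩ := hx
  have hy0 : (0:ℝ) < (x+1)/2 := by linarith
  have hy1 : (x+1)/2 < 1 := by linarith
  have hxy : x < (x+1)/2 := by linarith
  obtain ⟨C, hC⟩ := ((hconv _ ⟨hy0, hy1⟩).tendsto_atTop_zero.abs.bddAbove_range)
  have hC' : ∀ n : ℕ, |φ n * ((x+1)/2) ^ n| ≤ C := fun n => hC ⟨n, rfl⟩
  have hq0 : 0 ≤ x / ((x+1)/2) := by positivity
  have hq1 : x / ((x+1)/2) < 1 := (div_lt_one hy0).2 hxy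
  refine Summable.of_nonneg_of_le (fun n => by positivity) (fun n => ?_)
    ((summable_geometric_of_lt_one hq0 hq1).mul_left C)
  have hyn : ((x+1)/2) ^ n ≠ 0 := by positivity
  have he : |φ n| * x ^ n = |φ n * ((x+1)/2)^n| * (x / ((x+1)/2)) ^ n := by
    rw [abs_mul, abs_pow, abs_of_pos hy0, div_pow]
    field_simp
    ring_nf
    rw [mul_assoc (|φ n| * x ^ n), ← mul_pow, inv_mul_cancel₀ (by linarith : (1:ℝ)+x ≠ 0), one_pow, mul_one]
  rw [he]
  exact mul_le_mul_of_nonneg_right (hC' n) (by positivity)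

lemma coeff_zero (g : ℕ → ℝ)
    (hsum : ∀ x ∈ Set.Ioo (0 : ℝ) 1, Summable fun m => g m * x ^ m)
    (hzero : ∀ x ∈ Set.Ioo (0 : ℝ) 1, ∑' m, g m * x ^ m = 0) :
    ∀ m, g m = 0 := by
  have habs := absSummable g hsum
  have hhalf : ((1:ℝ)/2) ∈ Set.Ioo (0:ℝ) 1 := by norm_num
  have hSsum : Summable fun j => |g j| * (1/2:ℝ) ^ j := habs _ hhalf
  set S : ℝ := ∑' j, |g j| * (1/2:ℝ) ^ j with hSdef
  have hS0 : 0 ≤ S := tsum_nonneg fun j => by positivity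
  intro m
  induction m using Nat.strong_induction_on with
  | _ m ih =>
  have key : ∀ x ∈ Set.Ioo (0:ℝ) 1, ∑' k, g (k + m) * x ^ k = 0 := by
    intro x hx
    have hinj : Function.Injective (fun k : ℕ => k + m) := add_left_injective m
    have hsupp : Function.support (fun k => g k * x ^ k) ⊆ Set.range (fun k : ℕ => k + m) := by
      intro k hk
      rcases le_or_gt m k with h | h
      · exact ⟨k - m, by show k - m + m = k; omega⟩
      · exact absurd (by show g k * x ^ k = 0; rw [ih k h]; ring) hk
    have h1 : ∑' k, g (k + m) * x ^ (k + m) = 0 := by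
      rw [hinj.tsum_eq hsupp]; exact hzero x hx
    have h2 : x ^ m * ∑' k, g (k + m) * x ^ k = 0 := by
      rw [← tsum_mul_left, ← h1]
      exact tsum_congr fun k => by rw [pow_add]; ring
    exact (mul_eq_zero.mp h2).resolve_left (pow_ne_zero _ hx.1.ne')
  by_contra hgm
  have hgm' : 0 < |g m| := abs_pos.mpr hgm
  set B : ℝ := 2 ^ (m+1) * S with hBdef
  have hB0 : 0 ≤ B := by positivity
  set x : ℝ := min (1/4) (|g m| / (B + 1)) with hxdef
  have hx0 : 0 < x := lt_min (by norm_num) (by positivity)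
  have hx14 : x ≤ 1/4 := min_le_left _ _
  have hxIoo : x ∈ Set.Ioo (0:ℝ) 1 := ⟨hx0, by linarith⟩
  have hxm : (x : ℝ) ^ m ≠ 0 := pow_ne_zero _ hx0.ne'
  have hs0 : Summable fun k => g (k + m) * x ^ (k + m) :=
    (summable_nat_add_iff (f := fun j => g j * x ^ j) m).2 (hsum x hxIoo)
  have hs1 : Summable fun k => g (k + m) * x ^ k := by
    refine (hs0.mul_left ((x ^ m)⁻¹)).congr fun k => ?_
    rw [pow_add]; field_simp
  have h3 := Summable.tsum_eq_zero_add hs1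
  rw [key x hxIoo] at h3
  simp only [zero_add, pow_zero, mul_one] at h3
  have hs2 : Summable fun k => |g (k + (m+1))| * x ^ (k + (m+1)) :=
    (summable_nat_add_iff (f := fun j => |g j| * x ^ j) (m+1)).2 (habs x hxIoo)
  have hs3 : Summable fun k => |g (k + 1 + m) * x ^ (k+1)| := by
    refine (hs2.mul_left ((x ^ m)⁻¹)).congr fun k => ?_
    have e : k + (m+1) = k + 1 + m := by omega
    rw [e, pow_add, abs_mul, abs_pow, abs_of_pos hx0]
    field_simp
  have hbound : ∀ k, |g (k + 1 + m) * x ^ (k+1)| ≤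
      (x * 2^(m+1)) * (|g (k + (m+1))| * (1/2:ℝ) ^ (k + (m+1))) := by
    intro k
    have e : k + (m+1) = k + 1 + m := by omega
    rw [abs_mul, abs_pow, abs_of_pos hx0, e]
    have h1 : x ^ (k+1) ≤ x * (1/2:ℝ)^k := by
      rw [pow_succ]
      calc x^k * x ≤ (1/4:ℝ)^k * x :=
            mul_le_mul_of_nonneg_right (pow_le_pow_left₀ hx0.le hx14 k) hx0.le
        _ ≤ (1/2:ℝ)^k * x :=
            mul_le_mul_of_nonneg_right (pow_le_pow_left₀ (by norm_num) (by norm_num) k) hx0.le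
        _ = x * (1/2)^k := mul_comm _ _
    have h2 : (x * 2^(m+1)) * (|g (k+1+m)| * (1/2:ℝ)^(k+1+m)) = |g (k+1+m)| * (x * (1/2:ℝ)^k) := by
      have e2 : ((1:ℝ)/2)^(k+1+m) = (1/2:ℝ)^k * (1/2:ℝ)^(m+1) := by
        rw [← pow_add]; congr 1; omega
      have h2b : (2:ℝ)^(m+1) * (1/2:ℝ)^(m+1) = 1 := by
        rw [← mul_pow]; norm_num
      calc (x * 2^(m+1)) * (|g (k+1+m)| * (1/2:ℝ)^(k+1+m))
          = |g (k+1+m)| * (x * (((2:ℝ)^(m+1) * (1/2:ℝ)^(m+1)) * (1/2:ℝ)^k)) := by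
            rw [e2]; ring
        _ = |g (k+1+m)| * (x * (1/2:ℝ)^k) := by rw [h2b]; ring
    rw [h2]
    exact mul_le_mul_of_nonneg_left h1 (abs_nonneg _)
  have hsum_bound : Summable fun k => (x * 2^(m+1)) * (|g (k+(m+1))| * (1/2:ℝ)^(k+(m+1))) :=
    (((summable_nat_add_iff (f := fun j => |g j| * (1/2:ℝ) ^ j) (m+1)).2 hSsum).mul_left _)
  have htail : ∑' k, |g (k+(m+1))| * (1/2:ℝ)^(k+(m+1)) ≤ S := by
    refine Summable.tsum_le_tsum_of_inj (fun k : ℕ => k + (m+1)) (add_left_injective (m+1))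
      (fun c _ => by positivity) (fun i => le_refl _)
      ((summable_nat_add_iff (f := fun j => |g j| * (1/2:ℝ) ^ j) (m+1)).2 hSsum) hSsum
  have hfinal : |g m| ≤ x * B := by
    have e1 : g m = -∑' k, g (k + 1 + m) * x ^ (k+1) := by linarith [h3]
    rw [e1, abs_neg]
    calc |∑' k, g (k+1+m) * x^(k+1)| ≤ ∑' k, |g (k+1+m) * x^(k+1)| := by
          simpa only [Real.norm_eq_abs] using norm_tsum_le_tsum_norm (f := fun k => g (k+1+m) * x^(k+1)) (by simpa only [Real.norm_eq_abs] using hs3)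
      _ ≤ ∑' k, (x * 2^(m+1)) * (|g (k+(m+1))| * (1/2:ℝ)^(k+(m+1))) :=
          Summable.tsum_le_tsum hbound hs3 hsum_bound
      _ = (x * 2^(m+1)) * ∑' k, |g (k+(m+1))| * (1/2:ℝ)^(k+(m+1)) := tsum_mul_left
      _ ≤ (x * 2^(m+1)) * S := mul_le_mul_of_nonneg_left htail (by positivity)
      _ = x * B := by rw [hBdef]; ring
  have hxle : x ≤ |g m| / (B + 1) := min_le_right _ _
  have hmul : x * (B+1) ≤ |g m| := (le_div_iff₀ (by positivity)).1 hxle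
  nlinarith

lemma integral_eq (φ : ℕ → ℝ)
    (hconv : ∀ x ∈ Set.Ioo (0 : ℝ) 1, Summable fun n => φ n * x ^ n)
    (x : ℝ) (hx : x ∈ Set.Ioo (0:ℝ) 1) :
    ∫ t in (x^2)..x, (∑' n, φ n * t ^ n)
      = ∑' n, φ n * ((x^(n+1) - (x^2)^(n+1)) / ((n:ℝ)+1)) := by
  obtain ⟨hx0, hx1⟩ := hx
  have habs := absSummable φ hconv x ⟨hx0, hx1⟩
  have hx2 : x^2 ≤ x := by nlinarith
  have hmeas : ∀ n : ℕ, AEStronglyMeasurable (fun t : ℝ => φ n * t ^ n)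
      (volume.restrict (Set.Ioc (x^2) x)) :=
    fun n => (Continuous.aestronglyMeasurable (by continuity))
  have hco : ∀ n : ℕ, ((‖|φ n| * x ^ n‖₊ : ℝ≥0) : ℝ) = |φ n| * x ^ n := fun n => by
    rw [coe_nnnorm, Real.norm_eq_abs]; exact abs_of_nonneg (by positivity)
  have hsum' : Summable fun n => ‖|φ n| * x ^ n‖₊ := by
    rw [← NNReal.summable_coe]
    exact habs.congr fun n => (hco n).symm
  have hb : ∀ n : ℕ, (∫⁻ t in Set.Ioc (x^2) x, ‖φ n * t ^ n‖₊) ≤ (‖|φ n| * x ^ n‖₊ : ℝ≥0∞) := by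
    intro n
    have h1 : ∀ t ∈ Set.Ioc (x^2) x, (‖φ n * t ^ n‖₊ : ℝ≥0∞) ≤ (‖|φ n| * x ^ n‖₊ : ℝ≥0∞) := by
      intro t ht
      have ht0 : 0 ≤ t := le_trans (sq_nonneg x) ht.1.le
      have hnorm : ‖φ n * t ^ n‖ ≤ ‖|φ n| * x ^ n‖ := by
        rw [Real.norm_eq_abs, Real.norm_eq_abs, abs_mul, abs_mul, abs_abs, abs_pow, abs_pow,
          abs_of_nonneg ht0, abs_of_nonneg hx0.le]
        exact mul_le_mul_of_nonneg_left (pow_le_pow_left₀ ht0 ht.2 n) (abs_nonneg _)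
      have : ‖φ n * t ^ n‖₊ ≤ ‖|φ n| * x ^ n‖₊ := by
        rw [← NNReal.coe_le_coe, coe_nnnorm, coe_nnnorm]; exact hnorm
      exact ENNReal.coe_le_coe.2 this
    calc (∫⁻ t in Set.Ioc (x^2) x, ‖φ n * t ^ n‖₊)
        ≤ ∫⁻ _t in Set.Ioc (x^2) x, (‖|φ n| * x ^ n‖₊ : ℝ≥0∞) :=
          setLIntegral_mono measurable_const h1
      _ = (‖|φ n| * x ^ n‖₊ : ℝ≥0∞) * volume (Set.Ioc (x^2) x) := setLIntegral_const _ _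
      _ ≤ (‖|φ n| * x ^ n‖₊ : ℝ≥0∞) * 1 := by
          refine mul_le_mul_right ?_ _
          rw [Real.volume_Ioc]
          exact ENNReal.ofReal_le_one.2 (by nlinarith)
      _ = _ := mul_one _
  have hne : (∑' n, ∫⁻ t in Set.Ioc (x^2) x, ‖φ n * t ^ n‖₊) ≠ ⊤ :=
    ne_top_of_le_ne_top (ENNReal.tsum_coe_ne_top_iff_summable.2 hsum') (ENNReal.tsum_le_tsum hb)
  rw [intervalIntegral.integral_of_le hx2, MeasureTheory.integral_tsum hmeas hne]
  refine tsum_congr fun n => ?_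
  rw [← intervalIntegral.integral_of_le hx2, intervalIntegral.integral_const_mul, integral_pow]

section main
variable (φ : ℕ → ℝ)

lemma gcoef_zero
    (hconv : ∀ x ∈ Set.Ioo (0 : ℝ) 1, Summable fun n => φ n * x ^ n)
    (heq : ∀ x ∈ Set.Ioo (0 : ℝ) 1,
      2 * ∫ t in (x ^ 2)..x, (∑' n, φ n * t ^ n) = (x - x ^ 2) * ∑' n, φ n * x ^ n) :
    ∀ m, gcoef φ m = 0 := by
  have habs := absSummable φ hconv
  -- basic summability facts for each x
  have sT1 : ∀ x ∈ Set.Ioo (0:ℝ) 1, Summable fun n => (2 * φ n / ((n:ℝ)+1)) * x ^ (n+1) := by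
    intro x hx
    refine Summable.of_norm_bounded ((habs x hx).mul_left 2) fun n => ?_
    have hn1 : (0:ℝ) < (n:ℝ) + 1 := by positivity
    rw [Real.norm_eq_abs, abs_mul, abs_div, abs_pow, abs_of_pos hx.1, abs_mul, abs_two,
      abs_of_pos hn1]
    have h1 : 2 * |φ n| / ((n:ℝ)+1) ≤ 2 * |φ n| := by
      apply div_le_self (by positivity)
      have : (0:ℝ) ≤ (n:ℝ) := Nat.cast_nonneg n
      linarith
    have h2 : x ^ (n+1) ≤ x ^ n := pow_le_pow_of_le_one hx.1.le hx.2.le (Nat.le_succ n)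
    calc 2 * |φ n| / ((n:ℝ)+1) * x ^ (n+1) ≤ 2 * |φ n| * x ^ n :=
          mul_le_mul h1 h2 (pow_nonneg hx.1.le _) (by positivity)
      _ = 2 * (|φ n| * x ^ n) := by ring
  have sT2 : ∀ x ∈ Set.Ioo (0:ℝ) 1, Summable fun n => (2 * φ n / ((n:ℝ)+1)) * x ^ (2*n+2) := by
    intro x hx
    refine Summable.of_norm_bounded ((habs x hx).mul_left 2) fun n => ?_
    have hn1 : (0:ℝ) < (n:ℝ) + 1 := by positivity
    rw [Real.norm_eq_abs, abs_mul, abs_div, abs_pow, abs_of_pos hx.1, abs_mul, abs_two,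
      abs_of_pos hn1]
    have h1 : 2 * |φ n| / ((n:ℝ)+1) ≤ 2 * |φ n| := by
      apply div_le_self (by positivity)
      have : (0:ℝ) ≤ (n:ℝ) := Nat.cast_nonneg n
      linarith
    have h2 : x ^ (2*n+2) ≤ x ^ n := pow_le_pow_of_le_one hx.1.le hx.2.le (by omega)
    calc 2 * |φ n| / ((n:ℝ)+1) * x ^ (2*n+2) ≤ 2 * |φ n| * x ^ n :=
          mul_le_mul h1 h2 (pow_nonneg hx.1.le _) (by positivity)
      _ = 2 * (|φ n| * x ^ n) := by ring
  have sT3 : ∀ x ∈ Set.Ioo (0:ℝ) 1, Summable fun n => φ n * x ^ (n+1) := by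
    intro x hx
    refine Summable.of_norm_bounded (habs x hx) fun n => ?_
    rw [Real.norm_eq_abs, abs_mul, abs_pow, abs_of_pos hx.1]
    exact mul_le_mul_of_nonneg_left
      (pow_le_pow_of_le_one hx.1.le hx.2.le (Nat.le_succ n)) (abs_nonneg _)
  have sT4 : ∀ x ∈ Set.Ioo (0:ℝ) 1, Summable fun n => φ n * x ^ (n+2) := by
    intro x hx
    refine Summable.of_norm_bounded (habs x hx) fun n => ?_
    rw [Real.norm_eq_abs, abs_mul, abs_pow, abs_of_pos hx.1]
    exact mul_le_mul_of_nonneg_left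
      (pow_le_pow_of_le_one hx.1.le hx.2.le (by omega)) (abs_nonneg _)
  -- injections and vanishing
  have hinj1 : Function.Injective (fun n : ℕ => n + 1) := add_left_injective 1
  have hinj2 : Function.Injective (fun n : ℕ => n + 2) := add_left_injective 2
  have hinjB : Function.Injective (fun n : ℕ => 2*n + 2) := fun a b h => by
    have : 2*a+2 = 2*b+2 := h
    omega
  have hvA : ∀ m : ℕ, m ∉ Set.range (fun n : ℕ => n + 1) → Acoef φ m = 0 := by
    intro m hm
    have hm0 : m = 0 := by
      by_contra h
      exact hm ⟨m - 1, by show m - 1 + 1 = m; omega⟩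
    subst hm0; rfl
  have hvC : ∀ m : ℕ, m ∉ Set.range (fun n : ℕ => n + 1) → Ccoef φ m = 0 := by
    intro m hm
    have hm0 : m = 0 := by
      by_contra h
      exact hm ⟨m - 1, by show m - 1 + 1 = m; omega⟩
    subst hm0; rfl
  have hvD : ∀ m : ℕ, m ∉ Set.range (fun n : ℕ => n + 2) → Dcoef φ m = 0 := by
    intro m hm
    match m, hm with
    | 0, _ => rfl
    | 1, _ => rfl
    | (k+2), hm => exact absurd ⟨k, rfl⟩ hm
  have hvB : ∀ m : ℕ, m ∉ Set.range (fun n : ℕ => 2*n + 2) → Bcoef φ m = 0 := by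
    intro m hm
    refine Bcoef_not φ m ?_
    rintro ⟨h1, h2⟩
    exact hm ⟨m/2 - 1, by show 2*(m/2-1) + 2 = m; omega⟩
  have sA : ∀ x ∈ Set.Ioo (0:ℝ) 1, Summable fun m => Acoef φ m * x ^ m := by
    intro x hx
    refine (hinj1.summable_iff fun m hm => by rw [hvA m hm, zero_mul]).1 ?_
    exact (sT1 x hx).congr fun n => by
      show (2 * φ n / ((n:ℝ)+1)) * x ^ (n+1) = Acoef φ (n+1) * x ^ (n+1)
      rw [Acoef_succ]
  have sC : ∀ x ∈ Set.Ioo (0:ℝ) 1, Summable fun m => Ccoef φ m * x ^ m := by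
    intro x hx
    refine (hinj1.summable_iff fun m hm => by rw [hvC m hm, zero_mul]).1 ?_
    exact (sT3 x hx).congr fun n => by
      show φ n * x ^ (n+1) = Ccoef φ (n+1) * x ^ (n+1)
      rw [Ccoef_succ]
  have sD : ∀ x ∈ Set.Ioo (0:ℝ) 1, Summable fun m => Dcoef φ m * x ^ m := by
    intro x hx
    refine (hinj2.summable_iff fun m hm => by rw [hvD m hm, zero_mul]).1 ?_
    exact (sT4 x hx).congr fun n => by
      show φ n * x ^ (n+2) = Dcoef φ (n+2) * x ^ (n+2)
      rw [Dcoef_succ]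
  have sB : ∀ x ∈ Set.Ioo (0:ℝ) 1, Summable fun m => Bcoef φ m * x ^ m := by
    intro x hx
    refine (hinjB.summable_iff fun m hm => by rw [hvB m hm, zero_mul]).1 ?_
    exact (sT2 x hx).congr fun n => by
      show (2 * φ n / ((n:ℝ)+1)) * x ^ (2*n+2) = Bcoef φ (2*n+2) * x ^ (2*n+2)
      rw [Bcoef_even]
  refine coeff_zero (gcoef φ) ?_ ?_
  · intro x hx
    exact ((((sA x hx).sub (sB x hx)).sub (sC x hx)).add (sD x hx)).congr fun m => by
      show Acoef φ m * x ^ m - Bcoef φ m * x ^ m - Ccoef φ m * x ^ m + Dcoef φ m * x ^ m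
        = gcoef φ m * x ^ m
      simp only [gcoef]; ring
  · intro x hx
    have hA : ∑' m, Acoef φ m * x ^ m = ∑' n, (2 * φ n / ((n:ℝ)+1)) * x ^ (n+1) := by
      rw [← hinj1.tsum_eq (f := fun m => Acoef φ m * x ^ m)
        (Function.support_subset_iff'.2 fun m hm => by rw [hvA m hm, zero_mul])]
      exact tsum_congr fun n => by
        show Acoef φ (n+1) * x ^ (n+1) = (2 * φ n / ((n:ℝ)+1)) * x ^ (n+1)
        rw [Acoef_succ]
    have hC : ∑' m, Ccoef φ m * x ^ m = ∑' n, φ n * x ^ (n+1) := by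
      rw [← hinj1.tsum_eq (f := fun m => Ccoef φ m * x ^ m)
        (Function.support_subset_iff'.2 fun m hm => by rw [hvC m hm, zero_mul])]
      exact tsum_congr fun n => by
        show Ccoef φ (n+1) * x ^ (n+1) = φ n * x ^ (n+1)
        rw [Ccoef_succ]
    have hD : ∑' m, Dcoef φ m * x ^ m = ∑' n, φ n * x ^ (n+2) := by
      rw [← hinj2.tsum_eq (f := fun m => Dcoef φ m * x ^ m)
        (Function.support_subset_iff'.2 fun m hm => by rw [hvD m hm, zero_mul])]
      exact tsum_congr fun n => by
        show Dcoef φ (n+2) * x ^ (n+2) = φ n * x ^ (n+2)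
        rw [Dcoef_succ]
    have hB : ∑' m, Bcoef φ m * x ^ m = ∑' n, (2 * φ n / ((n:ℝ)+1)) * x ^ (2*n+2) := by
      rw [← hinjB.tsum_eq (f := fun m => Bcoef φ m * x ^ m)
        (Function.support_subset_iff'.2 fun m hm => by rw [hvB m hm, zero_mul])]
      exact tsum_congr fun n => by
        show Bcoef φ (2*n+2) * x ^ (2*n+2) = (2 * φ n / ((n:ℝ)+1)) * x ^ (2*n+2)
        rw [Bcoef_even]
    have hint := integral_eq φ hconv x hx
    have heqx := heq x hx
    rw [hint] at heqx
    have hL : 2 * ∑' n, φ n * ((x^(n+1) - (x^2)^(n+1)) / ((n:ℝ)+1))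
        = (∑' n, (2 * φ n / ((n:ℝ)+1)) * x ^ (n+1))
          - ∑' n, (2 * φ n / ((n:ℝ)+1)) * x ^ (2*n+2) := by
      rw [← tsum_mul_left, ← Summable.tsum_sub (sT1 x hx) (sT2 x hx)]
      refine tsum_congr fun n => ?_
      have hpow : (x^2)^(n+1) = x^(2*n+2) := by
        rw [← pow_mul, show 2*(n+1) = 2*n+2 from by ring]
      rw [hpow]
      have hne : ((n:ℝ)+1) ≠ 0 := by positivity
      field_simp
    have hR : (x - x^2) * ∑' n, φ n * x ^ n
        = (∑' n, φ n * x ^ (n+1)) - ∑' n, φ n * x ^ (n+2) := by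
      have e3 : x * ∑' n, φ n * x ^ n = ∑' n, φ n * x ^ (n+1) := by
        rw [← tsum_mul_left]; exact tsum_congr fun n => by ring
      have e4 : x^2 * ∑' n, φ n * x ^ n = ∑' n, φ n * x ^ (n+2) := by
        rw [← tsum_mul_left]; exact tsum_congr fun n => by ring
      rw [sub_mul, e3, e4]
    have hgsum : ∑' m, gcoef φ m * x ^ m
        = ((∑' m, Acoef φ m * x ^ m) - ∑' m, Bcoef φ m * x ^ m - ∑' m, Ccoef φ m * x ^ m)
          + ∑' m, Dcoef φ m * x ^ m := by
      rw [← Summable.tsum_sub (sA x hx) (sB x hx), ← Summable.tsum_sub ((sA x hx).sub (sB x hx)) (sC x hx),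
        ← Summable.tsum_add (((sA x hx).sub (sB x hx)).sub (sC x hx)) (sD x hx)]
      exact tsum_congr fun m => by simp only [gcoef]; ring
    rw [hgsum, hA, hB, hC, hD]
    linarith [heqx, hL, hR]

end main

section ext
variable (φ : ℕ → ℝ)

lemma hI_lem (hg : ∀ m, gcoef φ m = 0) (i : ℕ) :
    2 * φ (2*i+2) = (φ (2*i+2) - φ (2*i+1)) * (2*(i:ℝ)+3) := by
  have h : Acoef φ (2*i+3) - Bcoef φ (2*i+3) - Ccoef φ (2*i+3) + Dcoef φ (2*i+3) = 0 :=
    hg (2*i+3)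
  have eA : Acoef φ (2*i+3) = 2 * φ (2*i+2) / (((2*i+2 : ℕ) : ℝ) + 1) := by
    rw [show 2*i+3 = (2*i+2)+1 from by omega]; exact Acoef_succ φ (2*i+2)
  have eB : Bcoef φ (2*i+3) = 0 := Bcoef_not φ _ (by omega)
  have eC : Ccoef φ (2*i+3) = φ (2*i+2) := by
    rw [show 2*i+3 = (2*i+2)+1 from by omega]; exact Ccoef_succ φ (2*i+2)
  have eD : Dcoef φ (2*i+3) = φ (2*i+1) := by
    rw [show 2*i+3 = (2*i+1)+2 from by omega]; exact Dcoef_succ φ (2*i+1)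
  rw [eA, eB, eC, eD] at h
  have ec : (((2*i+2 : ℕ)) : ℝ) + 1 = 2*(i:ℝ)+3 := by push_cast; ring
  rw [ec] at h
  have hd : (2*(i:ℝ)+3) ≠ 0 := by positivity
  field_simp at h
  linear_combination h

lemma hII_lem (hφ0 : φ 0 = 0) (hg : ∀ m, gcoef φ m = 0) (n : ℕ) :
    2 * (φ (2*n+1) * ((n:ℝ)+1)) - 2 * (φ n * (2*(n:ℝ)+2))
      = (φ (2*n+1) - φ (2*n)) * ((2*(n:ℝ)+2) * ((n:ℝ)+1)) := by
  cases n with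
  | zero => push_cast; rw [hφ0]; ring_nf
  | succ i =>
    have h : Acoef φ (2*i+4) - Bcoef φ (2*i+4) - Ccoef φ (2*i+4) + Dcoef φ (2*i+4) = 0 :=
      hg (2*i+4)
    have eA : Acoef φ (2*i+4) = 2 * φ (2*i+3) / (((2*i+3 : ℕ) : ℝ) + 1) := by
      rw [show 2*i+4 = (2*i+3)+1 from by omega]; exact Acoef_succ φ (2*i+3)
    have eB : Bcoef φ (2*i+4) = 2 * φ (i+1) / (((i+1 : ℕ) : ℝ) + 1) := by
      rw [show 2*i+4 = 2*(i+1)+2 from by omega]; exact Bcoef_even φ (i+1)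
    have eC : Ccoef φ (2*i+4) = φ (2*i+3) := by
      rw [show 2*i+4 = (2*i+3)+1 from by omega]; exact Ccoef_succ φ (2*i+3)
    have eD : Dcoef φ (2*i+4) = φ (2*i+2) := by
      rw [show 2*i+4 = (2*i+2)+2 from by omega]; exact Dcoef_succ φ (2*i+2)
    rw [eA, eB, eC, eD] at h
    have ec1 : (((2*i+3 : ℕ)) : ℝ) + 1 = 2*(i:ℝ)+4 := by push_cast; ring
    have ec2 : (((i+1 : ℕ)) : ℝ) + 1 = (i:ℝ)+2 := by push_cast; ring
    rw [ec1, ec2] at h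
    have hd1 : (2*(i:ℝ)+4) ≠ 0 := by positivity
    have hd2 : ((i:ℝ)+2) ≠ 0 := by positivity
    rw [show 2*(i+1)+1 = 2*i+3 from by omega, show 2*(i+1) = 2*i+2 from by omega]
    push_cast
    field_simp at h
    linear_combination h

end ext

theorem stmt_11
    (φ : ℕ → ℝ) (hφ0 : φ 0 = 0)
    (hconv : ∀ x ∈ Set.Ioo (0 : ℝ) 1, Summable fun n => φ n * x ^ n)
    (heq : ∀ x ∈ Set.Ioo (0 : ℝ) 1,
      2 * ∫ t in (x ^ 2)..x, (∑' n, φ n * t ^ n) = (x - x ^ 2) * ∑' n, φ n * x ^ n) :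
    ∀ n : ℕ, 1 ≤ n →
      φ (2 * n) / 2 = ∑ k ∈ Finset.Icc n (2 * n), φ k / ((k : ℝ) + 1) ∧
      φ (2 * n + 1) / 2 = ∑ k ∈ Finset.Icc (n + 1) (2 * n + 1), φ k / ((k : ℝ) + 1) := by
  have hg : ∀ m, gcoef φ m = 0 := gcoef_zero φ hconv heq
  have hI := hI_lem φ hg
  have hII := hII_lem φ hφ0 hg
  intro n hn
  induction n, hn using Nat.le_induction with
  | base =>
    constructor
    · have h := hI 0
      have e : Finset.Icc 1 2 = ({1, 2} : Finset ℕ) := rfl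
      rw [show 2*1 = 2 from rfl, e, Finset.sum_pair (by norm_num : (1:ℕ) ≠ 2)]
      norm_num at h ⊢
      linarith
    · have h := hII 1
      have h0 := hI 0
      have e : Finset.Icc 2 3 = ({2, 3} : Finset ℕ) := rfl
      rw [show 2*1+1 = 3 from rfl, e, Finset.sum_pair (by norm_num : (2:ℕ) ≠ 3)]
      norm_num at h h0 ⊢
      linarith
  | succ n hn ih =>
    obtain ⟨ihA, ihB⟩ := ih
    have hstepA : φ (2*(n+1)) / 2 = ∑ k ∈ Finset.Icc (n+1) (2*(n+1)), φ k / ((k:ℝ)+1) := by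
      rw [show 2*(n+1) = 2*n+1+1 from by omega,
        Finset.sum_Icc_succ_top (by omega : n+1 ≤ 2*n+1+1), ← ihB,
        show 2*n+1+1 = 2*n+2 from by omega,
        show ((2*n+2 : ℕ) : ℝ) + 1 = 2*(n:ℝ)+3 from by push_cast; ring]
      have h := hI n
      have hd : (2*(n:ℝ)+3) ≠ 0 := by positivity
      field_simp
      linear_combination (-1:ℝ) * h
    refine ⟨hstepA, ?_⟩
    have e1 : Finset.Icc ((n+1)+1) (2*(n+1)+1) = Finset.Ioc (n+1) (2*(n+1)+1) :=
      Finset.Icc_add_one_left_eq_Ioc _ _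
    have e2 : ∑ k ∈ Finset.Icc (n+1) (2*(n+1)+1), φ k / ((k:ℝ)+1)
        = φ (n+1) / (((n+1 : ℕ) : ℝ)+1)
          + ∑ k ∈ Finset.Ioc (n+1) (2*(n+1)+1), φ k / ((k:ℝ)+1) := by
      rw [← Finset.Ioc_insert_left (by omega : n+1 ≤ 2*(n+1)+1),
        Finset.sum_insert Finset.left_notMem_Ioc]
    have e4 : ∑ k ∈ Finset.Icc (n+1) (2*(n+1)+1), φ k / ((k:ℝ)+1)
        = (∑ k ∈ Finset.Icc (n+1) (2*(n+1)), φ k / ((k:ℝ)+1))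
          + φ (2*(n+1)+1) / (((2*(n+1)+1 : ℕ) : ℝ)+1) :=
      Finset.sum_Icc_succ_top (by omega) _
    rw [e1]
    have h := hII (n+1)
    have goal2 : φ (2*(n+1)+1) / 2
        = φ (2*(n+1)) / 2 + φ (2*(n+1)+1) / (((2*(n+1)+1 : ℕ) : ℝ)+1)
          - φ (n+1) / (((n+1 : ℕ) : ℝ)+1) := by
      push_cast at h ⊢
      have hd1 : (2*(n:ℝ)+4) ≠ 0 := by positivity
      have hd2 : ((n:ℝ)+2) ≠ 0 := by positivity
      field_simp at h ⊢
      linear_combination (-2*(n:ℝ)-4) * h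
    linarith [e2, e4, hstepA, goal2]
end

section
/- Let φ : ℕ → ℝ be a sequence such that for every n ≥ 1, φ(2n)/2 = ∑_{k=n}^{2n} φ(k)/(k+1) and φ(2n+1)/2 = ∑_{k=n+1}^{2n+1} φ(k)/(k+1). Then for every n ≥ 2: if n is even, φ(n) = ((n+1)/(n−1))·φ(n−1), and if n is odd, φ(n) = ((n+1)/(n−1))·φ(n−1) − (4/(n−1))·φ((n−1)/2). -/
theorem stmt_12
    (φ : ℕ → ℝ)
    (hrec : ∀ n : ℕ, 1 ≤ n →
      φ (2 * n) / 2 = ∑ k ∈ Finset.Icc n (2 * n), φ k / ((k : ℝ) + 1) ∧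
      φ (2 * n + 1) / 2 = ∑ k ∈ Finset.Icc (n + 1) (2 * n + 1), φ k / ((k : ℝ) + 1)) :
    ∀ n : ℕ, 2 ≤ n →
      (Even n → φ n = (((n : ℝ) + 1) / ((n : ℝ) - 1)) * φ (n - 1)) ∧
      (Odd n → φ n = (((n : ℝ) + 1) / ((n : ℝ) - 1)) * φ (n - 1)
          - (4 / ((n : ℝ) - 1)) * φ ((n - 1) / 2)) := by
  intro n hn
  constructor
  · -- even case
    rintro ⟨m, rfl⟩
    have hm : 1 ≤ m := by omega
    rcases Nat.eq_or_lt_of_le hm with h1 | h1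
    · -- m = 1, n = 2
      subst h1
      have h := (hrec 1 le_rfl).1
      have hI : Finset.Icc 1 2 = {1, 2} := rfl
      rw [hI] at h
      rw [Finset.sum_insert (by decide), Finset.sum_singleton] at h
      norm_num at h ⊢
      linarith
    · -- m ≥ 2, write m = p + 2
      obtain ⟨p, rfl⟩ : ∃ q, m = q + 2 := ⟨m - 2, by omega⟩
      have h1 := (hrec (p + 2) (by omega)).1
      have h2 := (hrec (p + 1) (by omega)).2
      have hsplit : ∑ k ∈ Finset.Icc (p + 2) (2 * (p + 2)), φ k / ((k : ℝ) + 1)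
          = (∑ k ∈ Finset.Icc (p + 2) (2 * (p + 1) + 1), φ k / ((k : ℝ) + 1))
            + φ (2 * (p + 2)) / ((2 * (p + 2) : ℕ) + 1 : ℝ) := by
        have : 2 * (p + 2) = (2 * (p + 1) + 1) + 1 := by ring
        rw [this, Finset.sum_Icc_succ_top (by omega)]
      rw [hsplit, ← h2] at h1
      push_cast at h1
      have hx0 : 0 ≤ (p : ℝ) := Nat.cast_nonneg p
      have h5 : (2 * (p:ℝ) + 5) ≠ 0 := by positivity
      have key : φ (2 * (p + 2)) * (2 * (p:ℝ) + 3) = (2 * (p:ℝ) + 5) * φ (2 * (p + 1) + 1) := by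
        field_simp at h1
        linear_combination h1
      have hE : p + 2 + (p + 2) = 2 * (p + 2) := by ring
      have hE2 : p + 2 + (p + 2) - 1 = 2 * (p + 1) + 1 := by omega
      rw [hE2, hE]
      push_cast
      have h3 : 2 * ((p:ℝ) + 2) - 1 ≠ 0 := ne_of_gt (by nlinarith)
      rw [div_mul_eq_mul_div, eq_div_iff h3]
      linear_combination key
  · -- odd case
    rintro ⟨m, rfl⟩
    have hm : 1 ≤ m := by omega
    have h1 := (hrec m hm).1
    have h2 := (hrec m hm).2
    have hsplit1 : ∑ k ∈ Finset.Icc m (2 * m), φ k / ((k : ℝ) + 1)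
        = φ m / ((m : ℕ) + 1 : ℝ) + ∑ k ∈ Finset.Icc (m + 1) (2 * m), φ k / ((k : ℝ) + 1) := by
      rw [← Finset.add_sum_Ioc_eq_sum_Icc (by omega), Finset.Icc_add_one_left_eq_Ioc]
    have hsplit2 : ∑ k ∈ Finset.Icc (m + 1) (2 * m + 1), φ k / ((k : ℝ) + 1)
        = (∑ k ∈ Finset.Icc (m + 1) (2 * m), φ k / ((k : ℝ) + 1))
          + φ (2 * m + 1) / ((2 * m + 1 : ℕ) + 1 : ℝ) := by
      rw [Finset.sum_Icc_succ_top (by omega)]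
    rw [hsplit1] at h1
    rw [hsplit2] at h2
    set S := ∑ k ∈ Finset.Icc (m + 1) (2 * m), φ k / ((k : ℝ) + 1) with hS
    push_cast at h1 h2
    have hx1 : (1 : ℝ) ≤ (m : ℝ) := Nat.one_le_cast.mpr hm
    have hne1 : ((m:ℝ) + 1) ≠ 0 := by positivity
    have hne2 : (2 * (m:ℝ) + 1 + 1) ≠ 0 := by positivity
    have key : (m:ℝ) * φ (2 * m + 1) = ((m:ℝ) + 1) * φ (2 * m) - 2 * φ m := by
      field_simp at h1 h2
      linear_combination h2 / 2 - h1
    rw [show 2 * m + 1 - 1 = 2 * m from by omega, show 2 * m / 2 = m from by omega]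
    push_cast
    have hx0 : (2 * (m:ℝ) + 1 - 1) ≠ 0 := ne_of_gt (by nlinarith)
    field_simp
    linear_combination 2 * key
end

section
/- Let H : ℝ → ℝ be continuous on the closed interval [0,1], suppose H(0) = 1/2, and suppose that for every z ∈ [0,1), (1 − z)·H(z) = ∫_z^1 (2t/(1+t))·H(t²) dt. Then H(1) = 1/(2·(1 − ln 2)). -/
open Set Filter MeasureTheory intervalIntegral Real
open scoped Topology

namespace Stmt13Aux

variable (H : ℝ → ℝ)

noncomputable def f (t : ℝ) : ℝ := 2 * t / (1 + t) * H (t ^ 2)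

noncomputable def q (s : ℝ) : ℝ := H (max s 0) * (1 - s)⁻¹

noncomputable def G (y : ℝ) : ℝ := ∫ t in (0:ℝ)..y, f H t

noncomputable def Q (y : ℝ) : ℝ := ∫ s in (0:ℝ)..y, q H s

variable {H} (hH : ContinuousOn H (Set.Icc (0 : ℝ) 1))

include hH

lemma cont_sq : ∀ x ∈ Ioo (-1:ℝ) 1, ContinuousAt (fun t => H (t ^ 2)) x := by
  intro x hx
  have hmem : x ^ 2 ∈ Icc (0:ℝ) 1 := ⟨sq_nonneg x, by nlinarith [hx.1, hx.2]⟩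
  have h1 : ContinuousWithinAt H (Icc 0 1) (x ^ 2) := hH.continuousWithinAt hmem
  have h2 : Tendsto (fun t : ℝ => t ^ 2) (𝓝 x) (𝓝[Icc (0:ℝ) 1] (x ^ 2)) := by
    rw [tendsto_nhdsWithin_iff]
    refine ⟨(continuous_pow 2).continuousAt, ?_⟩
    filter_upwards [isOpen_Ioo.eventually_mem hx] with t ht
    exact ⟨sq_nonneg t, by nlinarith [ht.1, ht.2]⟩
  exact h1.tendsto.comp h2

lemma f_contAt : ∀ x ∈ Ioo (-1:ℝ) 1, ContinuousAt (f H) x := by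
  intro x hx
  have h1 : ContinuousAt (fun t : ℝ => 2 * t / (1 + t)) x := by
    apply ContinuousAt.div (by fun_prop) (by fun_prop)
    intro h; linarith [hx.1]
  exact h1.mul (cont_sq hH x hx)

lemma q_contAt : ∀ x ∈ Iio (1:ℝ), ContinuousAt (q H) x := by
  intro x hx
  have hmem : max x 0 ∈ Icc (0:ℝ) 1 := ⟨le_max_right _ _, max_le hx.le zero_le_one⟩
  have h1 : ContinuousWithinAt H (Icc 0 1) (max x 0) := hH.continuousWithinAt hmem
  have h2 : Tendsto (fun s : ℝ => max s 0) (𝓝 x) (𝓝[Icc (0:ℝ) 1] (max x 0)) := by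
    rw [tendsto_nhdsWithin_iff]
    refine ⟨(continuous_id.max continuous_const).continuousAt, ?_⟩
    filter_upwards [isOpen_Iio.eventually_mem hx] with t ht
    exact ⟨le_max_right _ _, max_le ht.le zero_le_one⟩
  have h3 : ContinuousAt (fun s : ℝ => H (max s 0)) x := h1.tendsto.comp h2
  exact h3.mul (ContinuousAt.inv₀ (by fun_prop)
    (by intro h; have := sub_eq_zero.mp h; simp only [Set.mem_Iio] at hx; linarith))

lemma f_contOn : ContinuousOn (f H) (Icc (0:ℝ) 1) := by
  apply ContinuousOn.mul
  · apply ContinuousOn.div (by fun_prop) (by fun_prop)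
    intro t ht; intro h; linarith [ht.1]
  · exact hH.comp ((continuous_pow 2).continuousOn)
      (fun t ht => ⟨sq_nonneg t, by nlinarith [ht.1, ht.2]⟩)

lemma f_int {a b : ℝ} (h : uIcc a b ⊆ Icc (0:ℝ) 1) :
    IntervalIntegrable (f H) volume a b :=
  ((f_contOn hH).mono h).intervalIntegrable

lemma q_int {a b : ℝ} (h : uIcc a b ⊆ Iio (1:ℝ)) :
    IntervalIntegrable (q H) volume a b :=
  ContinuousOn.intervalIntegrable
    (fun x hx => (q_contAt hH x (h hx)).continuousWithinAt)

lemma G_deriv : ∀ x ∈ Ico (0:ℝ) 1, HasDerivAt (G H) (f H x) x := by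
  intro x hx
  have hxI : x ∈ Ioo (-1:ℝ) 1 := ⟨by linarith [hx.1], hx.2⟩
  refine integral_hasDerivAt_right (f_int hH ?_) ?_ (f_contAt hH x hxI)
  · rw [uIcc_of_le hx.1]
    exact Icc_subset_Icc le_rfl hx.2.le
  · exact ContinuousAt.stronglyMeasurableAtFilter isOpen_Ioo (f_contAt hH) x hxI

lemma Q_deriv : ∀ x ∈ Ico (0:ℝ) 1, HasDerivAt (Q H) (q H x) x := by
  intro x hx
  refine integral_hasDerivAt_right (q_int hH ?_) ?_ (q_contAt hH x hx.2)
  · rw [uIcc_of_le hx.1]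
    exact fun s hs => lt_of_le_of_lt hs.2 hx.2
  · exact ContinuousAt.stronglyMeasurableAtFilter isOpen_Iio (q_contAt hH) x hx.2

omit hH

lemma integral_inv_one_sub {y : ℝ} (hy : y ∈ Ioo (0:ℝ) 1) :
    ∫ s in (y^2)..y, (1-s)⁻¹ = Real.log (1+y) := by
  have hy2 : y ^ 2 ≤ y := by nlinarith [hy.1.le, hy.2.le]
  have h1 : ∀ s ∈ uIcc (y^2) y, HasDerivAt (fun u : ℝ => -Real.log (1 - u)) ((1-s)⁻¹) s := by
    intro s hs
    rw [uIcc_of_le hy2] at hs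
    have hne : (1:ℝ) - s ≠ 0 := by
      have h := hs.2; have h' := hy.2; intro hc; linarith [sub_eq_zero.mp hc]
    have h2 : HasDerivAt (fun u : ℝ => 1 - u) (-1) s := (hasDerivAt_id s).const_sub 1
    have h3 := (Real.hasDerivAt_log hne).comp s h2
    refine h3.neg.congr_deriv ?_
    ring
  have h2 : IntervalIntegrable (fun s : ℝ => (1-s)⁻¹) volume (y^2) y := by
    apply ContinuousOn.intervalIntegrable
    intro s hs
    rw [uIcc_of_le hy2] at hs
    have hne : (1:ℝ) - s ≠ 0 := by
      have h := hs.2; have h' := hy.2; intro hc; linarith [sub_eq_zero.mp hc]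
    exact ((continuous_const.sub continuous_id).continuousAt.inv₀ hne).continuousWithinAt
  rw [integral_eq_sub_of_hasDerivAt h1 h2]
  have h3 : 1 - y^2 = (1-y)*(1+y) := by ring
  have hy1 : (0:ℝ) < 1 - y := by linarith [hy.2]
  have hy3 : (0:ℝ) < 1 + y := by linarith [hy.1]
  rw [h3, Real.log_mul (ne_of_gt hy1) (ne_of_gt hy3)]
  ring

include hH

lemma heq' (heq : ∀ z ∈ Set.Ico (0 : ℝ) 1,
      (1 - z) * H z = ∫ t in z..1, (2 * t / (1 + t)) * H (t ^ 2)) :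
    ∀ z ∈ Set.Ico (0 : ℝ) 1, (1 - z) * H z = G H 1 - G H z := by
  intro z hz
  have h1 : G H 1 - G H z = ∫ t in z..1, f H t := by
    apply integral_interval_sub_left (f_int hH (by rw [uIcc_of_le zero_le_one]))
      (f_int hH (by rw [uIcc_of_le hz.1]; exact Icc_subset_Icc le_rfl hz.2.le))
  rw [h1, heq z hz]
  simp only [f]

lemma key (heq : ∀ z ∈ Set.Ico (0 : ℝ) 1,
      (1 - z) * H z = ∫ t in z..1, (2 * t / (1 + t)) * H (t ^ 2)) :
    ∀ y ∈ Set.Ico (0 : ℝ) 1, y * H y = G H y + (Q H y - Q H (y ^ 2)) := by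
  intro y hy
  set Φ : ℝ → ℝ :=
    fun u => u * (G H 1 - G H u) * (1 - u)⁻¹ - G H u - (Q H u - Q H (u ^ 2)) with hΦdef
  have hderiv : ∀ x ∈ Ico (0:ℝ) 1, HasDerivAt Φ 0 x := by
    intro x hx
    obtain ⟨hx0, hx1⟩ := hx
    have hx2 : x ^ 2 ∈ Ico (0:ℝ) 1 := ⟨sq_nonneg x, by nlinarith⟩
    have hne1 : (1:ℝ) - x ≠ 0 := by intro h; linarith [sub_eq_zero.mp h]
    have hne2 : (1:ℝ) + x ≠ 0 := by intro h; linarith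
    have hne3 : (1:ℝ) - x^2 ≠ 0 := by intro h; nlinarith [sub_eq_zero.mp h]
    have hGd := G_deriv hH x ⟨hx0, hx1⟩
    have hQd := Q_deriv hH x ⟨hx0, hx1⟩
    have hQd2 := Q_deriv hH (x^2) hx2
    have hsq := hasDerivAt_pow 2 x
    have hQcomp : HasDerivAt (fun u : ℝ => Q H (u ^ 2))
        (q H (x ^ 2) * ((2:ℕ) * x ^ (2 - 1))) x := hQd2.comp_of_eq x hsq rfl
    have h0 : HasDerivAt (fun u : ℝ => 1 - u) (-1) x := (hasDerivAt_id x).const_sub 1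
    have hinv : HasDerivAt (fun u : ℝ => (1 - u)⁻¹) (-(-1) / (1-x)^2) x := h0.inv hne1
    have h1 : HasDerivAt (fun u : ℝ => u * (G H 1 - G H u))
        (1 * (G H 1 - G H x) + x * (0 - f H x)) x :=
      (hasDerivAt_id x).mul ((hasDerivAt_const x (G H 1)).sub hGd)
    have h2 := h1.mul hinv
    have h3 := (h2.sub hGd).sub (hQd.sub hQcomp)
    refine h3.congr_deriv (Eq.symm ?_)
    rw [← heq' hH heq x ⟨hx0, hx1⟩]
    simp only [f, q, max_eq_left hx0, max_eq_left (sq_nonneg x)]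
    push_cast
    field_simp
    ring
  have hΦ0 : Φ 0 = 0 := by
    have hG0 : G H 0 = 0 := integral_same
    have : (0:ℝ) ^ 2 = 0 := by norm_num
    simp [hΦdef, hG0, this]
  have hΦy : Φ y = 0 := by
    rcases eq_or_lt_of_le hy.1 with h | h
    · subst h; exact hΦ0
    · have hcont : ContinuousOn Φ (Icc 0 y) := fun u hu =>
        ((hderiv u ⟨hu.1, lt_of_le_of_lt hu.2 hy.2⟩).continuousAt).continuousWithinAt
      have hc := constant_of_has_deriv_right_zero hcont
        (fun u hu => (hderiv u ⟨hu.1, hu.2.trans hy.2⟩).hasDerivWithinAt)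
      rw [hc y ⟨hy.1, le_refl y⟩, hΦ0]
  have hne1 : (1:ℝ) - y ≠ 0 := by intro h; have := sub_eq_zero.mp h; linarith [hy.2]
  have h4 : y * (G H 1 - G H y) * (1 - y)⁻¹ = G H y + (Q H y - Q H (y ^ 2)) := by
    have := hΦy
    simp only [hΦdef] at this
    linarith
  rw [← heq' hH heq y hy] at h4
  rw [← h4]
  field_simp

end Stmt13Aux

open Stmt13Aux

theorem stmt_13
    (H : ℝ → ℝ) (hH : ContinuousOn H (Set.Icc (0 : ℝ) 1))
    (hH0 : H 0 = 1/2)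
    (heq : ∀ z ∈ Set.Ico (0 : ℝ) 1,
      (1 - z) * H z = ∫ t in z..1, (2 * t / (1 + t)) * H (t ^ 2)) :
    H 1 = 1 / (2 * (1 - Real.log 2)) := by
  have hkey := key hH heq
  have hG1 : G H 1 = 1/2 := by
    have h := heq' hH heq 0 ⟨le_refl 0, one_pos⟩
    have hG0 : G H 0 = 0 := integral_same
    rw [hG0, hH0] at h
    linarith
  -- the filter
  have hle : 𝓝[<] (1:ℝ) ≤ 𝓝[Icc (0:ℝ) 1] 1 := by
    rw [← nhdsWithin_Ioo_eq_nhdsLT (zero_lt_one : (0:ℝ) < 1)]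
    exact nhdsWithin_mono 1 Ioo_subset_Icc_self
  have hHlim : Tendsto H (𝓝[<] (1:ℝ)) (𝓝 (H 1)) :=
    (hH.continuousWithinAt ⟨zero_le_one, le_refl 1⟩).tendsto.mono_left hle
  have L1 : Tendsto (fun y : ℝ => y * H y) (𝓝[<] (1:ℝ)) (𝓝 (H 1)) := by
    have := (tendsto_id.mono_left (nhdsWithin_le_nhds : 𝓝[<] (1:ℝ) ≤ 𝓝 1)).mul hHlim
    simpa using this
  have L2 : Tendsto (fun y : ℝ => G H y) (𝓝[<] (1:ℝ)) (𝓝 ((1:ℝ)/2)) := by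
    have hint' : IntegrableOn (f H) (uIcc (0:ℝ) 1) volume := by
      rw [uIcc_of_le zero_le_one]
      exact (f_contOn hH).integrableOn_compact isCompact_Icc
    have hco := continuousOn_primitive_interval (μ := volume) (a := (0:ℝ)) (b := 1) hint'
    rw [uIcc_of_le zero_le_one] at hco
    have h := (hco.continuousWithinAt ⟨zero_le_one, le_refl 1⟩).tendsto.mono_left hle
    have h12 : (∫ t in (0:ℝ)..1, f H t) = (1:ℝ)/2 := hG1
    simpa only [h12, G] using h
  -- error term tends to 0
  have hErr : Tendsto (fun y : ℝ => ∫ s in (y^2)..y, (H s - H 1) * (1 - s)⁻¹)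
      (𝓝[<] (1:ℝ)) (𝓝 0) := by
    rw [Metric.tendsto_nhdsWithin_nhds]
    intro ε hε
    obtain ⟨δ₁, hδ₁, hδp⟩ := Metric.tendsto_nhdsWithin_nhds.mp hHlim (ε/2) (by positivity)
    refine ⟨min (δ₁/2) (1/2), by positivity, ?_⟩
    intro y hy hdist
    have hy1 : y < 1 := hy
    rw [Real.dist_eq, abs_sub_lt_iff] at hdist
    have hmin1 : min (δ₁/2) (1/2) ≤ δ₁/2 := min_le_left _ _
    have hmin2 : min (δ₁/2) (1/2) ≤ 1/2 := min_le_right _ _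
    have hd1 : 1 - y < δ₁/2 := by linarith [hdist.2]
    have hy0 : (0:ℝ) < y := by linarith [hdist.2]
    have hyI : y ∈ Ioo (0:ℝ) 1 := ⟨hy0, hy1⟩
    have hy2le : y^2 ≤ y := by nlinarith
    have hbound : ∀ s ∈ Icc (y^2) y, |H s - H 1| ≤ ε/2 := by
      intro s hs
      have hs1 : s < 1 := lt_of_le_of_lt hs.2 hy1
      have hsd : dist s 1 < δ₁ := by
        rw [Real.dist_eq, abs_sub_lt_iff]
        constructor
        · linarith
        · nlinarith [hs.1]
      have := hδp hs1 hsd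
      rw [Real.dist_eq] at this
      exact this.le
    have hg_int : IntervalIntegrable (fun s : ℝ => ε/2 * (1 - s)⁻¹) volume (y^2) y := by
      apply ContinuousOn.intervalIntegrable
      intro s hs
      rw [uIcc_of_le hy2le] at hs
      have hne : (1:ℝ) - s ≠ 0 := by
        intro hc; have := sub_eq_zero.mp hc; linarith [hs.2]
      exact (continuousAt_const.mul
        (((continuous_const.sub continuous_id).continuousAt).inv₀ hne)).continuousWithinAt
    have hnorm : ‖∫ s in (y^2)..y, (H s - H 1) * (1 - s)⁻¹‖
        ≤ |∫ s in (y^2)..y, ε/2 * (1 - s)⁻¹| := by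
      apply intervalIntegral.norm_integral_le_abs_of_norm_le ?_ hg_int
      rw [uIoc_of_le hy2le]
      refine (ae_restrict_iff' measurableSet_Ioc).mpr (ae_of_all _ ?_)
      intro s hs
      have hsIcc : s ∈ Icc (y^2) y := ⟨hs.1.le, hs.2⟩
      have hpos : (0:ℝ) < 1 - s := by linarith [hsIcc.2]
      have habs : |(1 - s)⁻¹| = (1 - s)⁻¹ := abs_of_pos (inv_pos.mpr hpos)
      rw [Real.norm_eq_abs, abs_mul, habs]
      exact mul_le_mul_of_nonneg_right (hbound s hsIcc) (inv_pos.mpr hpos).le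
    have hval : ∫ s in (y^2)..y, ε/2 * (1 - s)⁻¹ = ε/2 * Real.log (1+y) := by
      rw [intervalIntegral.integral_const_mul, integral_inv_one_sub hyI]
    have hlog2 : Real.log (1+y) ≤ Real.log 2 :=
      Real.log_le_log (by linarith) (by linarith)
    have hlog2' : Real.log 2 < 1 := by
      have := Real.log_two_lt_d9; linarith
    have hlognn : (0:ℝ) ≤ Real.log (1+y) := Real.log_nonneg (by linarith)
    rw [dist_zero_right]
    rw [hval] at hnorm
    have habs2 : |ε/2 * Real.log (1+y)| = ε/2 * Real.log (1+y) :=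
      abs_of_nonneg (mul_nonneg (by linarith) hlognn)
    rw [habs2] at hnorm
    calc ‖∫ s in (y^2)..y, (H s - H 1) * (1 - s)⁻¹‖
        ≤ ε/2 * Real.log (1+y) := hnorm
      _ < ε := by nlinarith
  have hLog : Tendsto (fun y : ℝ => Real.log (1+y)) (𝓝[<] (1:ℝ)) (𝓝 (Real.log 2)) := by
    have h1 : Tendsto (fun y : ℝ => 1 + y) (𝓝[<] (1:ℝ)) (𝓝 2) := by
      have h : Tendsto (fun y : ℝ => 1 + y) (𝓝 (1:ℝ)) (𝓝 (1 + 1)) :=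
        (continuous_const.add continuous_id).tendsto 1
      norm_num at h
      exact h.mono_left nhdsWithin_le_nhds
    exact (Real.continuousAt_log (by norm_num : (2:ℝ) ≠ 0)).tendsto.comp h1
  have hev : ∀ᶠ y in 𝓝[<] (1:ℝ), y ∈ Ioo (0:ℝ) 1 :=
    Ioo_mem_nhdsLT_of_mem ⟨zero_lt_one, le_refl 1⟩
  have hL3 : Tendsto (fun y : ℝ => Q H y - Q H (y^2)) (𝓝[<] (1:ℝ))
      (𝓝 (H 1 * Real.log 2)) := by
    have heach : ∀ y ∈ Ioo (0:ℝ) 1, Q H y - Q H (y^2)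
        = (∫ s in (y^2)..y, (H s - H 1) * (1 - s)⁻¹) + H 1 * Real.log (1+y) := by
      intro y hy
      have hy2le : y^2 ≤ y := by nlinarith [hy.1.le, hy.2.le]
      have hy2pos : (0:ℝ) < y^2 := pow_pos hy.1 2
      have hy21 : y^2 < 1 := by nlinarith [hy.2]
      have hsub : Q H y - Q H (y^2) = ∫ s in (y^2)..y, q H s :=
        integral_interval_sub_left
          (q_int hH (by rw [uIcc_of_le hy.1.le]; exact fun s hs => lt_of_le_of_lt hs.2 hy.2))
          (q_int hH (by rw [uIcc_of_le hy2pos.le]; exact fun s hs => lt_of_le_of_lt hs.2 hy21))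
      have hsubset : Icc (y^2) y ⊆ Icc (0:ℝ) 1 := Icc_subset_Icc hy2pos.le hy.2.le
      have hinv_cont : ∀ s ∈ Icc (y^2) y, ContinuousWithinAt (fun s : ℝ => (1-s)⁻¹) (Icc (y^2) y) s := by
        intro s hs
        have hne : (1:ℝ) - s ≠ 0 := by
          intro hc; have := sub_eq_zero.mp hc; linarith [hs.2, hy.2]
        exact (((continuous_const.sub continuous_id).continuousAt).inv₀ hne).continuousWithinAt
      have hint1 : IntervalIntegrable (fun s : ℝ => (H s - H 1) * (1 - s)⁻¹) volume (y^2) y := by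
        apply ContinuousOn.intervalIntegrable
        rw [uIcc_of_le hy2le]
        exact ((hH.mono hsubset).sub continuousOn_const).mul (fun s hs => hinv_cont s hs)
      have hint2 : IntervalIntegrable (fun s : ℝ => H 1 * (1 - s)⁻¹) volume (y^2) y := by
        apply ContinuousOn.intervalIntegrable
        rw [uIcc_of_le hy2le]
        exact continuousOn_const.mul (fun s hs => hinv_cont s hs)
      have hcongr : (∫ s in (y^2)..y, q H s)
          = ∫ s in (y^2)..y, ((H s - H 1) * (1 - s)⁻¹ + H 1 * (1 - s)⁻¹) := by
        apply intervalIntegral.integral_congr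
        intro s hs
        rw [uIcc_of_le hy2le] at hs
        have hs0 : (0:ℝ) ≤ s := le_trans hy2pos.le hs.1
        simp only [q, max_eq_left hs0]
        ring
      rw [hsub, hcongr, intervalIntegral.integral_add hint1 hint2,
        intervalIntegral.integral_const_mul, integral_inv_one_sub hy]
    have h := (hErr.add (tendsto_const_nhds.mul hLog)).congr'
      (hev.mono fun y hy => (heach y hy).symm)
    simpa using h
  have hfin : H 1 - (1/2 + H 1 * Real.log 2) = 0 := by
    have T1 : Tendsto (fun y : ℝ => y * H y - (G H y + (Q H y - Q H (y^2)))) (𝓝[<] (1:ℝ))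
        (𝓝 (H 1 - (1/2 + H 1 * Real.log 2))) := L1.sub (L2.add hL3)
    have T2 : Tendsto (fun y : ℝ => y * H y - (G H y + (Q H y - Q H (y^2)))) (𝓝[<] (1:ℝ))
        (𝓝 0) := by
      apply Tendsto.congr' (hev.mono fun y hy => ?_) tendsto_const_nhds
      simp [hkey y ⟨hy.1.le, hy.2⟩]
    exact tendsto_nhds_unique T1 T2
  have hlog2' : Real.log 2 < 1 := by have := Real.log_two_lt_d9; linarith
  have hne : (2:ℝ) * (1 - Real.log 2) ≠ 0 := by nlinarith
  rw [eq_div_iff hne]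
  linear_combination 2 * hfin
end

section
/- Let H : ℝ → ℝ be continuous on [0,1) and suppose that for every z ∈ [0,1), (1 − z)·H(z) = ∫_z^1 (2t/(1+t))·H(t²) dt. Then for every ε ∈ (0,1), ∫_{(1−ε)²}^{1−ε} H(z)/(1 − z) dz = H(1 − ε) − H(0). -/
open Set MeasureTheory Filter Topology

/-- FTC: right derivative of the primitive of a function continuous on `[0,1)`. -/
private lemma ftc_aux (g : ℝ → ℝ) (hg : ContinuousOn g (Set.Ico 0 1)) {x : ℝ}
    (hx : x ∈ Set.Ico (0:ℝ) 1) :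
    HasDerivWithinAt (fun w => ∫ t in (0:ℝ)..w, g t) (g x) (Set.Ici x) x := by
  have hmem : Ico 0 1 ∈ 𝓝[>] x :=
    mem_of_superset (Ioo_mem_nhdsGT_of_mem ⟨le_refl x, hx.2⟩)
      (Ioo_subset_Ico_self.trans (Ico_subset_Ico hx.1 le_rfl))
  refine intervalIntegral.integral_hasDerivWithinAt_right ?_ ?_ ?_
  · refine (hg.mono ?_).intervalIntegrable
    rw [uIcc_of_le hx.1]
    exact fun t ht => ⟨ht.1, lt_of_le_of_lt ht.2 hx.2⟩
  · exact ⟨Ico 0 1, hmem, hg.aestronglyMeasurable measurableSet_Ico⟩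
  · exact (hg x hx).mono_of_mem_nhdsWithin hmem

theorem stmt_14
    (H : ℝ → ℝ) (hH : ContinuousOn H (Set.Ico (0 : ℝ) 1))
    (heq : ∀ z ∈ Set.Ico (0 : ℝ) 1,
      (1 - z) * H z = ∫ t in z..1, (2 * t / (1 + t)) * H (t ^ 2)) :
    ∀ ε ∈ Set.Ioo (0 : ℝ) 1,
      ∫ z in ((1 - ε) ^ 2)..(1 - ε), H z / (1 - z) = H (1 - ε) - H 0 := by
  intro ε hε
  set u : ℝ := 1 - ε with hu
  have hu0 : 0 ≤ u := by simp only [hu]; linarith [hε.2]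
  have hu1 : u < 1 := by simp only [hu]; linarith [hε.1]
  set f : ℝ → ℝ := fun t => 2 * t / (1 + t) * H (t ^ 2) with hf
  set k : ℝ → ℝ := fun z => H z / (1 - z) with hk
  -- basic continuity
  have hfc : ContinuousOn f (Ico 0 1) := by
    apply ContinuousOn.mul
    · exact ContinuousOn.div (by fun_prop) (by fun_prop)
        (fun t ht => by have := ht.1; intro h; linarith [ht.1])
    · refine hH.comp (by fun_prop) (fun t ht => ?_)
      exact ⟨sq_nonneg t, by nlinarith [ht.1, ht.2]⟩
  have hkc : ContinuousOn k (Ico 0 1) := by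
    refine ContinuousOn.div hH (by fun_prop) (fun z hz => ?_)
    have := hz.2; intro h; linarith
  -- integrability on compact subintervals of [0,1)
  have hint : ∀ g : ℝ → ℝ, ContinuousOn g (Ico 0 1) → ∀ a b : ℝ, 0 ≤ a → a ≤ b → b < 1 →
      IntervalIntegrable g volume a b := by
    intro g hg a b ha hab hb
    refine (hg.mono ?_).intervalIntegrable
    rw [uIcc_of_le hab]
    exact fun t ht => ⟨ha.trans ht.1, lt_of_le_of_lt ht.2 hb⟩
  -- f is interval integrable up to 1
  have hfInt : ∀ z ∈ Ico (0:ℝ) 1, IntervalIntegrable f volume z 1 := by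
    intro z hz
    by_contra hni
    have hall : ∀ w ∈ Ico (0:ℝ) 1, ¬ IntervalIntegrable f volume w 1 := by
      intro w hw hI
      rcases le_total w z with h | h
      · refine hni (hI.mono_set ?_)
        rw [uIcc_of_le (le_of_lt hz.2), uIcc_of_le (le_of_lt hw.2)]
        exact Icc_subset_Icc h le_rfl
      · exact hni ((hint f hfc z w hz.1 h hw.2).trans hI)
    have hH0 : ∀ w ∈ Ico (0:ℝ) 1, H w = 0 := by
      intro w hw
      have h1 := heq w hw
      rw [intervalIntegral.integral_undef (hall w hw)] at h1
      have h1w : (1:ℝ) - w ≠ 0 := by have := hw.2; intro h; linarith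
      exact (mul_eq_zero.mp h1).resolve_left h1w
    apply hni
    rw [intervalIntegrable_iff_integrableOn_Ioc_of_le (le_of_lt hz.2)]
    have hae : f =ᵐ[volume.restrict (Ioc z 1)] (fun _ => (0:ℝ)) := by
      have hne1 : ∀ᵐ t : ℝ ∂volume, t ≠ 1 := by
        have h0 : volume ({1} : Set ℝ) = 0 := Real.volume_singleton
        simpa using measure_eq_zero_iff_ae_notMem.mp h0
      filter_upwards [ae_restrict_mem measurableSet_Ioc, ae_restrict_of_ae hne1]
        with t ht htne
      have ht2 : t ^ 2 ∈ Ico (0:ℝ) 1 := by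
        constructor
        · exact sq_nonneg t
        · have h0t : 0 < t := lt_of_le_of_lt hz.1 ht.1
          have : t < 1 := lt_of_le_of_ne ht.2 htne
          nlinarith
      simp [hf, hH0 _ ht2]
    exact (integrable_congr hae).mpr (integrableOn_const (by simp))
  set C : ℝ := ∫ t in (0:ℝ)..1, f t with hC
  have hBC : ∀ w ∈ Ico (0:ℝ) 1, (1 - w) * H w = C - ∫ t in (0:ℝ)..w, f t := by
    intro w hw
    have h1 : (∫ t in (0:ℝ)..w, f t) + ∫ t in w..1, f t = C :=
      intervalIntegral.integral_add_adjacent_intervals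
        (hint f hfc 0 w le_rfl hw.1 hw.2) (hfInt w hw)
    rw [heq w hw]; linarith
  have hHeq : ∀ w ∈ Ico (0:ℝ) 1, H w = (C - ∫ t in (0:ℝ)..w, f t) / (1 - w) := by
    intro w hw
    have h1w : (1:ℝ) - w ≠ 0 := by have := hw.2; intro h; linarith
    rw [eq_div_iff h1w, mul_comm]
    exact hBC w hw
  -- right-derivative of H w - H 0
  have hHderiv : ∀ x ∈ Ico (0:ℝ) u,
      HasDerivWithinAt (fun w => H w - H 0) ((H x - f x) / (1 - x)) (Ici x) x := by
    intro x hx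
    have hx1 : x ∈ Ico (0:ℝ) 1 := ⟨hx.1, lt_of_lt_of_le hx.2 (le_of_lt hu1)⟩
    have h1x : (1:ℝ) - x ≠ 0 := by have := hx1.2; intro h; linarith
    have hB := ftc_aux f hfc hx1
    have hq : HasDerivWithinAt (fun w => (C - ∫ t in (0:ℝ)..w, f t) / (1 - w))
        (((0 - f x) * (1 - x) - (C - ∫ t in (0:ℝ)..x, f t) * (0 - 1)) / (1 - x) ^ 2)
        (Ici x) x := by
      exact HasDerivWithinAt.div ((hasDerivWithinAt_const x _ C).sub hB)
        ((hasDerivWithinAt_const x _ (1:ℝ)).sub (hasDerivWithinAt_id x _)) h1x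
    have hmem : Ico x 1 ∈ 𝓝[Ici x] x := Ico_mem_nhdsGE hx1.2
    have hcongr : HasDerivWithinAt H
        (((0 - f x) * (1 - x) - (C - ∫ t in (0:ℝ)..x, f t) * (0 - 1)) / (1 - x) ^ 2)
        (Ici x) x := by
      refine hq.congr_of_eventuallyEq ?_ (hHeq x hx1)
      exact eventuallyEq_of_mem hmem
        (fun w hw => hHeq w ⟨hx1.1.trans hw.1, hw.2⟩)
    have hval : ((0 - f x) * (1 - x) - (C - ∫ t in (0:ℝ)..x, f t) * (0 - 1)) / (1 - x) ^ 2
        = (H x - f x) / (1 - x) := by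
      rw [← hBC x hx1]
      field_simp
      ring
    exact (hval ▸ hcongr).sub_const (H 0)
  -- right-derivative of the integral side
  have hφderiv : ∀ x ∈ Ico (0:ℝ) u,
      HasDerivWithinAt (fun w => ∫ z in (w ^ 2)..w, k z) ((H x - f x) / (1 - x)) (Ici x) x := by
    intro x hx
    have hx1 : x ∈ Ico (0:ℝ) 1 := ⟨hx.1, lt_of_lt_of_le hx.2 (le_of_lt hu1)⟩
    have h1x : (1:ℝ) - x ≠ 0 := by have := hx1.2; intro h; linarith
    have h1px : (1:ℝ) + x ≠ 0 := by have := hx1.1; intro h; linarith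
    have hx2 : x ^ 2 ∈ Ico (0:ℝ) 1 := ⟨sq_nonneg x, by nlinarith [hx1.1, hx1.2]⟩
    have hA1 := ftc_aux k hkc hx1
    have hA2 := ftc_aux k hkc hx2
    have hsq : HasDerivWithinAt (fun w : ℝ => w ^ 2) (2 * x) (Ici x) x := by
      simpa using (hasDerivAt_pow 2 x).hasDerivWithinAt (s := Ici x)
    have hmaps : MapsTo (fun w : ℝ => w ^ 2) (Ici x) (Ici (x ^ 2)) := fun w hw => by
      simpa [mem_Ici] using pow_le_pow_left₀ hx1.1 hw 2
    have hcomp : HasDerivWithinAt (fun w => ∫ z in (0:ℝ)..(w ^ 2), k z)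
        (k (x ^ 2) * (2 * x)) (Ici x) x :=
      HasDerivWithinAt.comp (h₂ := fun y => ∫ z in (0:ℝ)..y, k z)
        (h := fun w : ℝ => w ^ 2) x hA2 hsq hmaps
    have hψ := hA1.sub hcomp
    have heqset : ∀ w ∈ Ico (0:ℝ) 1,
        (∫ z in (w ^ 2)..w, k z) =
          (∫ z in (0:ℝ)..w, k z) - ∫ z in (0:ℝ)..w ^ 2, k z := by
      intro w hw
      rw [intervalIntegral.integral_interval_sub_left
        (hint k hkc 0 w le_rfl hw.1 hw.2)
        (hint k hkc 0 (w ^ 2) le_rfl (sq_nonneg w) (by nlinarith [hw.1, hw.2]))]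
    have hmem : Ico x 1 ∈ 𝓝[Ici x] x := Ico_mem_nhdsGE hx1.2
    have hcongr : HasDerivWithinAt (fun w => ∫ z in (w ^ 2)..w, k z)
        (k x - k (x ^ 2) * (2 * x)) (Ici x) x := by
      refine hψ.congr_of_eventuallyEq ?_ (heqset x hx1)
      exact eventuallyEq_of_mem hmem
        (fun w hw => heqset w ⟨hx1.1.trans hw.1, hw.2⟩)
    have hval : k x - k (x ^ 2) * (2 * x) = (H x - f x) / (1 - x) := by
      have h1sq : (1:ℝ) - x ^ 2 ≠ 0 := by
        have : (1:ℝ) - x ^ 2 = (1 - x) * (1 + x) := by ring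
        rw [this]; exact mul_ne_zero h1x h1px
      simp only [hk, hf]
      field_simp
      ring
    exact hval ▸ hcongr
  -- continuity of both sides on [0, u]
  have hsubIcc : Icc (0:ℝ) u ⊆ Ico 0 1 := fun t ht => ⟨ht.1, lt_of_le_of_lt ht.2 hu1⟩
  have hcontg : ContinuousOn (fun w => H w - H 0) (Icc 0 u) :=
    (hH.mono hsubIcc).sub continuousOn_const
  have hAcont : ContinuousOn (fun w => ∫ z in (0:ℝ)..w, k z) (Icc 0 u) := by
    have := intervalIntegral.continuousOn_primitive_interval'
      (hint k hkc 0 u le_rfl hu0 hu1) (left_mem_uIcc (a := (0:ℝ)) (b := u))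
    rwa [uIcc_of_le hu0] at this
  have hcontφ : ContinuousOn (fun w => ∫ z in (w ^ 2)..w, k z) (Icc 0 u) := by
    have hmaps : MapsTo (fun w : ℝ => w ^ 2) (Icc 0 u) (Icc 0 u) := by
      intro w hw
      have h1 : w ^ 2 ≤ u ^ 2 := pow_le_pow_left₀ hw.1 hw.2 2
      have h2 : u ^ 2 ≤ u := by nlinarith [hu0, hu1]
      exact ⟨sq_nonneg w, h1.trans h2⟩
    have h2 : ContinuousOn (fun w => ∫ z in (0:ℝ)..(w ^ 2), k z) (Icc 0 u) :=
      hAcont.comp (by fun_prop) hmaps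
    refine (hAcont.sub h2).congr (fun w hw => ?_)
    have hw1 := hsubIcc hw
    rw [Pi.sub_apply, intervalIntegral.integral_interval_sub_left
      (hint k hkc 0 w le_rfl hw1.1 hw1.2)
      (hint k hkc 0 (w ^ 2) le_rfl (sq_nonneg w) (by nlinarith [hw1.1, hw1.2]))]
  have hzero : (fun w => ∫ z in (w ^ 2)..w, k z) 0 = (fun w => H w - H 0) 0 := by
    norm_num
  have hmain := eq_of_has_deriv_right_eq hφderiv hHderiv hcontφ hcontg hzero u
    (right_mem_Icc.mpr hu0)
  simpa [hk] using hmain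
end

section
/- Let a, b ∈ (0,1), let φ : ℕ → ℝ with φ 0 = 0, suppose the power series Φ(x) = ∑_{n≥1} φ n · xⁿ converges for x ∈ (0,1), and suppose there exists h ∈ (0,1) such that for all x ∈ (0,h), Φ(a·x + (1−a)·x²) + Φ(b·x + (1−b)·x²) = (a + b)·Φ(x). Then for every n ≥ 2, (a + b − aⁿ − bⁿ)·φ(n) = ∑_{j=1}^{⌊n/2⌋} (a^{n−2j}·(1−a)^j + b^{n−2j}·(1−b)^j)·C(n−j, j)·φ(n−j), where C(m,k) denotes the binomial coefficient. -/
open Filter in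
lemma stmt16_abs_summable (φ : ℕ → ℝ)
    (hconv : ∀ x ∈ Set.Ioo (0 : ℝ) 1, Summable fun n => φ n * x ^ n)
    (y : ℝ) (hy0 : 0 < y) (hy1 : y < 1) :
    Summable fun n => |φ n| * y ^ n := by
  set y' : ℝ := (1 + y) / 2 with hy'
  have hy'0 : 0 < y' := by positivity
  have hy'1 : y' < 1 := by rw [hy']; linarith
  have hyy' : y < y' := by rw [hy']; linarith
  have hs := hconv y' ⟨hy'0, hy'1⟩
  have h0 : Tendsto (fun n => |φ n * y' ^ n|) atTop (nhds 0) := by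
    simpa using hs.tendsto_atTop_zero.abs
  obtain ⟨M, hM⟩ := h0.bddAbove_range
  have hq0 : 0 ≤ y / y' := by positivity
  have hq1 : y / y' < 1 := (div_lt_one hy'0).mpr hyy'
  refine Summable.of_nonneg_of_le (fun n => by positivity)
    (fun n => ?_) ((summable_geometric_of_lt_one hq0 hq1).mul_left M)
  have hMn : |φ n * y' ^ n| ≤ M := hM ⟨n, rfl⟩
  have hne : (y' : ℝ) ^ n ≠ 0 := by positivity
  have : |φ n| * y ^ n = |φ n * y' ^ n| * (y / y') ^ n := by
    rw [abs_mul, abs_pow, abs_of_pos hy'0, div_pow]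
    rw [← div_pow, ← hy', mul_assoc, ← mul_pow, mul_div_cancel₀ _ hy'0.ne']
  rw [this]
  exact mul_le_mul_of_nonneg_right hMn (by positivity)

noncomputable def stmt16cc (ψ : ℕ → ℝ) (a : ℝ) (m : ℕ) : ℝ :=
  ∑ j ∈ Finset.range (m / 2 + 1),
    a ^ (m - 2 * j) * (1 - a) ^ j * ((m - j).choose j : ℝ) * ψ (m - j)

lemma stmt16_key (ψ : ℕ → ℝ) (a x : ℝ) (ha0 : 0 < a) (ha1 : a < 1)
    (hx0 : 0 < x)
    (hsum : Summable fun n => |ψ n| * (a * x + (1 - a) * x ^ 2) ^ n) :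
    HasSum (fun m => stmt16cc ψ a m * x ^ m)
      (∑' n, ψ n * (a * x + (1 - a) * x ^ 2) ^ n) := by
  have h1a : (0 : ℝ) ≤ 1 - a := by linarith
  set y : ℝ := a * x + (1 - a) * x ^ 2 with hy
  set w : ℕ × ℕ → ℝ := fun p =>
    (p.1.choose p.2 : ℝ) * (a ^ (p.1 - p.2) * ((1 - a) ^ p.2 * x ^ (p.1 + p.2))) with hwdef
  have hw : ∀ p, 0 ≤ w p := fun p =>
    mul_nonneg (Nat.cast_nonneg _) (mul_nonneg (pow_nonneg ha0.le _)
      (mul_nonneg (pow_nonneg h1a _) (pow_nonneg hx0.le _)))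
  -- row expansion
  have row : ∀ (χ : ℕ → ℝ) (n : ℕ),
      HasSum (fun k => if k ≤ n then χ n * w (n, k) else 0) (χ n * y ^ n) := by
    intro χ n
    have h1 : ∀ k ∉ Finset.range (n + 1), (if k ≤ n then χ n * w (n, k) else 0) = 0 := by
      intro k hk
      rw [Finset.mem_range, Nat.lt_succ_iff] at hk
      simp [hk]
    have h2 := hasSum_sum_of_ne_finset_zero (L := SummationFilter.unconditional _) h1
    have h3 : ∑ k ∈ Finset.range (n + 1), (if k ≤ n then χ n * w (n, k) else 0)
        = χ n * y ^ n := by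
      rw [Finset.sum_congr rfl (fun k hk =>
        if_pos (Nat.lt_succ_iff.mp (Finset.mem_range.mp hk))), ← Finset.mul_sum]
      congr 1
      have hy2 : y = ((1 - a) * x + a) * x := by rw [hy]; ring
      rw [hy2, mul_pow, add_pow, Finset.sum_mul]
      refine Finset.sum_congr rfl fun k hk => ?_
      rw [Finset.mem_range, Nat.lt_succ_iff] at hk
      simp only [hwdef]
      rw [mul_pow]
      rw [pow_add]
      ring
    rw [h3] at h2
    exact h2
  -- summability over the product
  set Fa : ℕ × ℕ → ℝ := fun p => if p.2 ≤ p.1 then |ψ p.1| * w p else 0 with hFadef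
  set F : ℕ × ℕ → ℝ := fun p => if p.2 ≤ p.1 then ψ p.1 * w p else 0 with hFdef
  have hFa : Summable Fa := by
    refine (summable_prod_of_nonneg ?_).mpr ⟨fun n => (row (fun m => |ψ m|) n).summable, ?_⟩
    · intro p
      simp only [hFadef]
      split
      · exact mul_nonneg (abs_nonneg _) (hw p)
      · exact le_refl 0
    · exact hsum.congr fun n => ((row (fun m => |ψ m|) n).tsum_eq).symm
  have habsF : ∀ p, |F p| = Fa p := by
    intro p
    simp only [hFdef, hFadef]
    split
    · rw [abs_mul, abs_of_nonneg (hw p)]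
    · exact abs_zero
  have hF : Summable F := summable_abs_iff.mp (hFa.congr fun p => (habsF p).symm)
  -- reindexing
  set ι : ℕ × ℕ → ℕ × ℕ := fun p => (p.1 + p.2, p.2) with hιdef
  have hinj : Function.Injective ι := by
    intro p q hpq
    simp only [hιdef, Prod.ext_iff] at hpq
    obtain ⟨h1, h2⟩ := hpq
    exact Prod.ext (by omega) h2
  set G : ℕ × ℕ → ℝ := fun p => if 2 * p.2 ≤ p.1 then
    ψ (p.1 - p.2) * (((p.1 - p.2).choose p.2 : ℝ) *
      (a ^ (p.1 - 2 * p.2) * ((1 - a) ^ p.2 * x ^ p.1))) else 0 with hGdef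
  have hcomp : ∀ p, G (ι p) = F p := by
    rintro ⟨n, k⟩
    simp only [hGdef, hFdef, hιdef, hwdef]
    have e1 : n + k - k = n := by omega
    by_cases hkn : k ≤ n
    · rw [if_pos (by omega : 2 * k ≤ n + k), if_pos hkn, e1]
      have e2 : n + k - 2 * k = n - k := by omega
      rw [e2]
    · rw [if_neg (by omega), if_neg hkn]
  have hG0 : ∀ q ∉ Set.range ι, G q = 0 := by
    rintro ⟨m, j⟩ hq
    simp only [hGdef]
    rw [if_neg]
    intro hmj
    exact hq ⟨(m - j, j), by simp only [hιdef]; exact Prod.ext (by omega) rfl⟩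
  have hGsum : HasSum G (∑' p, F p) := by
    refine (hinj.hasSum_iff hG0).mp ?_
    have : G ∘ ι = F := funext hcomp
    rw [this]
    exact hF.hasSum
  -- rows of G
  have rowG : ∀ m, HasSum (fun j => G (m, j)) (stmt16cc ψ a m * x ^ m) := by
    intro m
    have h1 : ∀ j ∉ Finset.range (m / 2 + 1), G (m, j) = 0 := by
      intro j hj
      rw [Finset.mem_range] at hj
      simp only [hGdef]
      rw [if_neg (by omega)]
    have h2 := hasSum_sum_of_ne_finset_zero (L := SummationFilter.unconditional _) h1
    have h3 : ∑ j ∈ Finset.range (m / 2 + 1), G (m, j) = stmt16cc ψ a m * x ^ m := by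
      rw [stmt16cc, Finset.sum_mul]
      refine Finset.sum_congr rfl fun j hj => ?_
      rw [Finset.mem_range, Nat.lt_succ_iff] at hj
      simp only [hGdef]
      rw [if_pos (by omega)]
      ring
    rw [h3] at h2
    exact h2
  have hmain := hGsum.prod_fiberwise rowG
  have hrows : HasSum (fun n => ψ n * y ^ n) (∑' p, F p) :=
    hF.hasSum.prod_fiberwise (row ψ)
  rw [← hrows.tsum_eq] at hmain
  exact hmain


theorem stmt_16
    (a b : ℝ) (ha : a ∈ Set.Ioo (0 : ℝ) 1) (hb : b ∈ Set.Ioo (0 : ℝ) 1)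
    (φ : ℕ → ℝ) (hφ0 : φ 0 = 0)
    (hconv : ∀ x ∈ Set.Ioo (0 : ℝ) 1, Summable fun n => φ n * x ^ n)
    (h : ℝ) (hh : h ∈ Set.Ioo (0 : ℝ) 1)
    (heq : ∀ x ∈ Set.Ioo (0 : ℝ) h,
      (∑' n, φ n * (a * x + (1 - a) * x ^ 2) ^ n) +
        (∑' n, φ n * (b * x + (1 - b) * x ^ 2) ^ n) =
      (a + b) * ∑' n, φ n * x ^ n) :
    ∀ n : ℕ, 2 ≤ n →
      (a + b - a ^ n - b ^ n) * φ n =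
        ∑ j ∈ Finset.Icc 1 (n / 2),
          (a ^ (n - 2 * j) * (1 - a) ^ j + b ^ (n - 2 * j) * (1 - b) ^ j) *
            (Nat.choose (n - j) j : ℝ) * φ (n - j) := by
  obtain ⟨ha0, ha1⟩ := ha
  obtain ⟨hb0, hb1⟩ := hb
  obtain ⟨hh0, hh1⟩ := hh
  -- the quadratic map sends (0,1) into (0,1)
  have hyIoo : ∀ c : ℝ, 0 < c → c < 1 → ∀ x ∈ Set.Ioo (0 : ℝ) 1,
      c * x + (1 - c) * x ^ 2 ∈ Set.Ioo (0 : ℝ) 1 := by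
    intro c hc0 hc1 x ⟨hx0, hx1⟩
    constructor
    · have : 0 < c * x := mul_pos hc0 hx0
      nlinarith [sq_nonneg x, mul_pos (sub_pos.mpr hc1) (mul_pos hx0 hx0)]
    · nlinarith [mul_pos (sub_pos.mpr hc1) (mul_pos hx0 (sub_pos.mpr hx1))]
  have habsy : ∀ (c : ℝ), 0 < c → c < 1 → ∀ x ∈ Set.Ioo (0 : ℝ) 1,
      Summable fun n => |φ n| * (c * x + (1 - c) * x ^ 2) ^ n := by
    intro c hc0 hc1 x hx
    obtain ⟨hy0, hy1⟩ := hyIoo c hc0 hc1 x hx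
    exact stmt16_abs_summable φ hconv _ hy0 hy1
  set d : ℕ → ℝ := fun m => stmt16cc φ a m + stmt16cc φ b m - (a + b) * φ m with hd_def
  -- the d-series vanishes on (0,h)
  have hzero : ∀ x ∈ Set.Ioo (0 : ℝ) h, HasSum (fun m => d m * x ^ m) 0 := by
    intro x ⟨hx0, hxh⟩
    have hx1 : x ∈ Set.Ioo (0 : ℝ) 1 := ⟨hx0, hxh.trans hh1⟩
    have HA := stmt16_key φ a x ha0 ha1 hx0 (habsy a ha0 ha1 x hx1)
    have HB := stmt16_key φ b x hb0 hb1 hx0 (habsy b hb0 hb1 x hx1)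
    have H0 : HasSum (fun m => φ m * x ^ m) (∑' n, φ n * x ^ n) := (hconv x hx1).hasSum
    have hsum := (HA.add HB).sub (H0.mul_left (a + b))
    have hfun : (fun m => (stmt16cc φ a m * x ^ m + stmt16cc φ b m * x ^ m) -
        (a + b) * (φ m * x ^ m)) = fun m => d m * x ^ m := by
      funext m; simp only [hd_def]; ring
    have hv : (∑' n, φ n * (a * x + (1 - a) * x ^ 2) ^ n) +
        (∑' n, φ n * (b * x + (1 - b) * x ^ 2) ^ n) -
        (a + b) * (∑' n, φ n * x ^ n) = 0 := by
      rw [heq x ⟨hx0, hxh⟩]; ring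
    rw [hfun, hv] at hsum
    exact hsum
  -- radius of convergence is positive
  set x0 : ℝ := h / 2 with hx0_def
  have hx00 : 0 < x0 := by positivity
  have hx01 : x0 ∈ Set.Ioo (0 : ℝ) 1 := ⟨hx00, by rw [hx0_def]; linarith⟩
  have hccabs : ∀ (c : ℝ), 0 < c → c < 1 →
      Summable fun m => stmt16cc (fun n => |φ n|) c m * x0 ^ m := by
    intro c hc0 hc1
    refine (stmt16_key (fun n => |φ n|) c x0 hc0 hc1 hx00 ?_).summable
    exact (habsy c hc0 hc1 x0 hx01).congr fun n => by rw [abs_abs]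
  have hccbd : ∀ (c : ℝ) (m : ℕ), 0 < c → c < 1 →
      |stmt16cc φ c m| ≤ stmt16cc (fun n => |φ n|) c m := by
    intro c m hc0 hc1
    refine (Finset.abs_sum_le_sum_abs _ _).trans (Finset.sum_le_sum fun j hj => ?_)
    have h1c : (0 : ℝ) ≤ 1 - c := by linarith
    rw [abs_mul, abs_mul, abs_mul, abs_of_nonneg (pow_nonneg hc0.le _),
      abs_of_nonneg (pow_nonneg h1c _), Nat.abs_cast]
  have hφabs : Summable fun m => |φ m| * x0 ^ m :=
    stmt16_abs_summable φ hconv x0 hx00 hx01.2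
  have hdsum : Summable fun m => |d m| * x0 ^ m := by
    have hmaj : Summable fun m => (stmt16cc (fun n => |φ n|) a m * x0 ^ m +
        stmt16cc (fun n => |φ n|) b m * x0 ^ m) + (a + b) * (|φ m| * x0 ^ m) :=
      ((hccabs a ha0 ha1).add (hccabs b hb0 hb1)).add (hφabs.mul_left (a + b))
    refine Summable.of_nonneg_of_le (fun m => by positivity) (fun m => ?_) hmaj
    have h1 : |d m| ≤ stmt16cc (fun n => |φ n|) a m + stmt16cc (fun n => |φ n|) b m +
        (a + b) * |φ m| := by
      have := hccbd a m ha0 ha1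
      have := hccbd b m hb0 hb1
      have habsab : |(a + b) * φ m| = (a + b) * |φ m| := by
        rw [abs_mul, abs_of_pos (by linarith : (0:ℝ) < a + b)]
      calc |d m| ≤ |stmt16cc φ a m| + |stmt16cc φ b m| + |(a + b) * φ m| := by
            simp only [hd_def]
            exact (abs_sub _ _).trans (add_le_add (abs_add_le _ _) le_rfl)
        _ ≤ _ := by rw [habsab]; linarith
    calc |d m| * x0 ^ m ≤ (stmt16cc (fun n => |φ n|) a m + stmt16cc (fun n => |φ n|) b m +
          (a + b) * |φ m|) * x0 ^ m :=
          mul_le_mul_of_nonneg_right h1 (by positivity)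
      _ = _ := by ring
  set p : FormalMultilinearSeries ℝ ℝ ℝ := FormalMultilinearSeries.ofScalars ℝ d with hp_def
  have hrad : (x0.toNNReal : ENNReal) ≤ p.radius := by
    refine p.le_radius_of_summable ?_
    refine hdsum.congr fun m => ?_
    rw [hp_def, FormalMultilinearSeries.ofScalars_norm, Real.norm_eq_abs,
      Real.coe_toNNReal _ hx00.le]
  have hrpos : 0 < p.radius := lt_of_lt_of_le (by
    rw [ENNReal.coe_pos]; exact Real.toNNReal_pos.mpr hx00) hrad
  have hat : HasFPowerSeriesAt p.sum p 0 :=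
    (p.hasFPowerSeriesOnBall hrpos).hasFPowerSeriesAt
  have hfx : ∀ x : ℝ, p.sum x = ∑' m, d m * x ^ m := by
    intro x
    refine tsum_congr fun m => ?_
    rw [hp_def, FormalMultilinearSeries.ofScalars_apply_eq, smul_eq_mul]
  have hfreq : ∃ᶠ z in nhdsWithin (0 : ℝ) {(0 : ℝ)}ᶜ, p.sum z = 0 := by
    have hmem : Set.Ioo (0 : ℝ) h ∈ nhdsWithin (0 : ℝ) (Set.Ioi 0) :=
      Ioo_mem_nhdsGT_of_mem ⟨le_refl 0, hh0⟩
    have hev : ∀ᶠ z in nhdsWithin (0 : ℝ) (Set.Ioi 0), p.sum z = 0 :=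
      Filter.eventually_of_mem hmem fun z hz => by rw [hfx]; exact (hzero z hz).tsum_eq
    exact hev.frequently.filter_mono
      (nhdsWithin_mono 0 fun z hz => ne_of_gt hz)
  have heven : ∀ᶠ z in nhds (0 : ℝ), p.sum z = 0 :=
    (hat.analyticAt.frequently_zero_iff_eventually_zero).mp hfreq
  have hp0 : p = 0 := hat.eq_zero_of_eventually (by
    filter_upwards [heven] with z hz using hz)
  have hd : d = 0 := (FormalMultilinearSeries.ofScalars_series_eq_zero ℝ).mp hp0
  -- conclude
  intro n hn
  have hdn : stmt16cc φ a n + stmt16cc φ b n - (a + b) * φ n = 0 := by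
    have := congrFun hd n
    simpa [hd_def] using this
  have hset : Finset.range (n / 2 + 1) = insert 0 (Finset.Icc 1 (n / 2)) := by
    ext k
    simp only [Finset.mem_range, Finset.mem_insert, Finset.mem_Icc, Nat.lt_succ_iff]
    omega
  have hcc : ∀ c : ℝ, stmt16cc φ c n = c ^ n * φ n +
      ∑ j ∈ Finset.Icc 1 (n / 2), c ^ (n - 2 * j) * (1 - c) ^ j *
        ((n - j).choose j : ℝ) * φ (n - j) := by
    intro c
    rw [stmt16cc, hset, Finset.sum_insert (by simp)]
    congr 1
    simp
  rw [hcc, hcc] at hdn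
  have hsplit : ∑ j ∈ Finset.Icc 1 (n / 2),
      (a ^ (n - 2 * j) * (1 - a) ^ j + b ^ (n - 2 * j) * (1 - b) ^ j) *
        ((n - j).choose j : ℝ) * φ (n - j)
      = (∑ j ∈ Finset.Icc 1 (n / 2), a ^ (n - 2 * j) * (1 - a) ^ j *
          ((n - j).choose j : ℝ) * φ (n - j)) +
        ∑ j ∈ Finset.Icc 1 (n / 2), b ^ (n - 2 * j) * (1 - b) ^ j *
          ((n - j).choose j : ℝ) * φ (n - j) := by
    rw [← Finset.sum_add_distrib]
    exact Finset.sum_congr rfl fun j hj => by ring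
  rw [hsplit]
  linarith
end

section
/- Let φ : ℕ → ℝ with φ 0 = 0, suppose the power series Φ(x) = ∑_{n≥1} φ n · xⁿ converges for x ∈ (0,1), and suppose that for every x ∈ (0,1), ∫_{1/2}^1 Φ(r·x + (1−r)·x²) dr = (3/8)·Φ(x). Then for every n ≥ 2, (3/8 − (1 − 2^{−n−1})/(n+1))·φ(n) = ∑_{j=1}^{⌊n/2⌋} (φ(n−j)/(2(n−j+1)))·c(n,j), where c(n,j) = ∑_{m=j}^{n−j} 2^{−m}·C(m, j) and C(m,j) denotes the binomial coefficient. -/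
open Finset

lemma comb_id (j : ℕ) : ∀ k, j ≤ k →
    ∑ i ∈ Icc (j+1) (k+1), Nat.choose (k+1) i = ∑ m ∈ Icc j k, 2^(k-m) * Nat.choose m j := by
  refine Nat.le_induction ?_ ?_
  · simp
  · intro k hk ih
    have h1 : ∑ i ∈ Icc (j+1) (k+1+1), Nat.choose (k+2) i
        = ∑ i ∈ Icc (j+1) (k+1), Nat.choose (k+2) i + 1 := by
      rw [Finset.sum_Icc_succ_top (by omega)]; simp
    have pascal : ∑ i ∈ Icc (j+1) (k+1), Nat.choose (k+2) i
        = ∑ i ∈ Icc (j+1) (k+1), Nat.choose (k+1) i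
          + ∑ i ∈ Icc (j+1) (k+1), Nat.choose (k+1) (i-1) := by
      rw [← Finset.sum_add_distrib]
      refine Finset.sum_congr rfl fun i hi => ?_
      simp only [mem_Icc] at hi
      obtain ⟨i, rfl⟩ : ∃ i', i = i' + 1 := ⟨i - 1, by omega⟩
      simp [Nat.choose_succ_succ (k+1) i, Nat.add_comm]
    have h2 : ∑ i ∈ Icc (j+1) (k+1), Nat.choose (k+1) (i-1)
        = ∑ m ∈ Icc j k, Nat.choose (k+1) m := by
      rw [show Icc (j+1) (k+1) = (Icc j k).map (addRightEmbedding 1) by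
        rw [Finset.map_add_right_Icc]]
      rw [Finset.sum_map]
      simp
    have h3 : ∑ m ∈ Icc j k, Nat.choose (k+1) m + 1
        = Nat.choose (k+1) j + ∑ i ∈ Icc (j+1) (k+1), Nat.choose (k+1) i := by
      have e1 : ∑ m ∈ Icc j (k+1), Nat.choose (k+1) m
          = ∑ m ∈ Icc j k, Nat.choose (k+1) m + Nat.choose (k+1) (k+1) :=
        Finset.sum_Icc_succ_top (by omega) _
      have e2 : ∑ m ∈ Icc j (k+1), Nat.choose (k+1) m
          = Nat.choose (k+1) j + ∑ i ∈ Icc (j+1) (k+1), Nat.choose (k+1) i := by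
        rw [show Icc j (k+1) = insert j (Icc (j+1) (k+1)) by
            rw [Finset.Icc_add_one_left_eq_Ioc, Finset.Ioc_insert_left (by omega)],
          Finset.sum_insert (by simp)]
      simp only [Nat.choose_self] at e1
      omega
    have h4 : ∑ m ∈ Icc j (k+1), 2^(k+1-m) * Nat.choose m j
        = ∑ m ∈ Icc j k, 2^(k+1-m) * Nat.choose m j + Nat.choose (k+1) j := by
      rw [Finset.sum_Icc_succ_top (by omega)]; simp
    have h5 : ∑ m ∈ Icc j k, 2^(k+1-m) * Nat.choose m j
        = 2 * ∑ m ∈ Icc j k, 2^(k-m) * Nat.choose m j := by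
      rw [Finset.mul_sum]
      refine Finset.sum_congr rfl fun m hm => ?_
      simp only [mem_Icc] at hm
      rw [show k+1-m = (k-m)+1 by omega, pow_succ]; ring
    simp only [show k + 1 + 1 = k + 2 by omega] at *
    omega

lemma sum_Icc_telescope (f : ℕ → ℝ) (a : ℕ) : ∀ b, a ≤ b + 1 →
    ∑ i ∈ Icc a b, (f (i+1) - f i) = f (b+1) - f a := by
  intro b
  induction b with
  | zero => intro h; interval_cases a <;> simp
  | succ b ih =>
    intro h
    rcases Nat.lt_or_ge a (b+2) with h' | h'
    · rw [Finset.sum_Icc_succ_top (by omega), ih (by omega)]; ring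
    · have : a = b + 2 := by omega
      subst this
      simp

noncomputable def Ikj (k j : ℕ) : ℝ := ∫ r in (1/2:ℝ)..1, r^(k-j) * (1-r)^j

lemma hasDerivAt_F (k j : ℕ) (hj : j ≤ k) (t : ℝ) :
    HasDerivAt (fun t : ℝ => ∑ i ∈ Icc (j+1) (k+1),
        (Nat.choose (k+1) i : ℝ) * (t^(k+1-i) * (1-t)^i))
      (-(((k:ℝ)+1) * (Nat.choose k j : ℝ) * (t^(k-j) * (1-t)^j))) t := by
  have hterm : ∀ i ∈ Icc (j+1) (k+1), HasDerivAt
      (fun t : ℝ => (Nat.choose (k+1) i : ℝ) * (t^(k+1-i) * (1-t)^i))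
      ((Nat.choose (k+1) i : ℝ) * ((↑(k+1-i) * t^(k+1-i-1)) * (1-t)^i
        + t^(k+1-i) * (-(↑i * (1-t)^(i-1))))) t := by
    intro i _
    have h1 : HasDerivAt (fun t : ℝ => t^(k+1-i)) (↑(k+1-i) * t^(k+1-i-1)) t :=
      hasDerivAt_pow _ t
    have h2 : HasDerivAt (fun t : ℝ => (1-t)^i) (-(↑i * (1-t)^(i-1))) t := by
      have := (hasDerivAt_pow i (1-t)).comp t ((hasDerivAt_id t).const_sub 1)
      simpa [Function.comp_def, mul_neg_one] using this
    exact ((h1.mul h2)).const_mul _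
  have hsum := HasDerivAt.fun_sum hterm
  set b : ℕ → ℝ := fun i => ((k+1).choose i : ℝ) * i * (t^(k+1-i) * (1-t)^(i-1)) with hb
  have htel : ∑ i ∈ Icc (j+1) (k+1),
      ((Nat.choose (k+1) i : ℝ) * ((↑(k+1-i) * t^(k+1-i-1)) * (1-t)^i
        + t^(k+1-i) * (-(↑i * (1-t)^(i-1)))))
      = -(((k:ℝ)+1) * (Nat.choose k j : ℝ) * (t^(k-j) * (1-t)^j)) := by
    have step : ∀ i ∈ Icc (j+1) (k+1),
        ((Nat.choose (k+1) i : ℝ) * ((↑(k+1-i) * t^(k+1-i-1)) * (1-t)^i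
          + t^(k+1-i) * (-(↑i * (1-t)^(i-1)))))
        = b (i+1) - b i := by
      intro i hi
      simp only [mem_Icc] at hi
      have key : (((k+1).choose (i+1) : ℝ)) * ((i:ℝ)+1) = ((k+1).choose i : ℝ) * ((k:ℝ)+1-i) := by
        have h2 : ((k+1).choose (i+1) * (i+1) : ℕ) = ((k+1).choose i * (k+1-i) : ℕ) :=
          Nat.choose_succ_right_eq (k+1) i
        have h3 := congrArg (Nat.cast : ℕ → ℝ) h2
        push_cast [Nat.cast_sub (by omega : i ≤ k+1)] at h3
        linarith [h3]
      simp only [hb]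
      rw [show k+1-(i+1) = k+1-i-1 by omega, show (i+1)-1 = i by omega]
      have hc : ((k+1-i : ℕ) : ℝ) = (k:ℝ)+1-i := by
        push_cast [Nat.cast_sub (by omega : i ≤ k+1)]; ring
      rw [hc]
      push_cast
      linear_combination (-(t^(k+1-i-1) * (1-t)^i)) * key
    rw [Finset.sum_congr rfl step, sum_Icc_telescope b (j+1) (k+1) (by omega)]
    have hbot : b (k+1+1) = 0 := by
      simp [hb, Nat.choose_eq_zero_of_lt (by omega : k+1 < k+1+1)]
    have htop : b (j+1) = ((k:ℝ)+1) * (Nat.choose k j : ℝ) * (t^(k-j) * (1-t)^j) := by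
      simp only [hb]
      have key : ((k:ℝ)+1) * (Nat.choose k j : ℝ) = ((k+1).choose (j+1) : ℝ) * ((j:ℝ)+1) := by
        have h3 := congrArg (Nat.cast : ℕ → ℝ) (Nat.add_one_mul_choose_eq k j)
        push_cast at h3
        linarith [h3]
      rw [show k+1-(j+1) = k-j by omega, show (j+1)-1 = j by omega]
      push_cast
      linear_combination (-(t^(k-j) * (1-t)^j)) * key
    rw [hbot, htop]; ring
  rwa [htel] at hsum

lemma keyK (k j : ℕ) (hj : j ≤ k) :
    (Nat.choose k j : ℝ) * Ikj k j
      = (∑ m ∈ Icc j k, (2:ℝ)⁻¹^m * (Nat.choose m j : ℝ)) / (2*((k:ℝ)+1)) := by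
  have hcont : Continuous fun t : ℝ => -(((k:ℝ)+1) * (Nat.choose k j : ℝ) * (t^(k-j) * (1-t)^j)) := by
    continuity
  have hftc := intervalIntegral.integral_eq_sub_of_hasDerivAt
    (f := fun t : ℝ => ∑ i ∈ Icc (j+1) (k+1), (Nat.choose (k+1) i : ℝ) * (t^(k+1-i) * (1-t)^i))
    (a := (1/2:ℝ)) (b := 1)
    (fun t _ => hasDerivAt_F k j hj t) (hcont.intervalIntegrable _ _)
  have hF1 : ∑ i ∈ Icc (j+1) (k+1), (Nat.choose (k+1) i : ℝ) * ((1:ℝ)^(k+1-i) * (1-(1:ℝ))^i) = 0 := by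
    refine Finset.sum_eq_zero fun i hi => ?_
    simp only [mem_Icc] at hi
    rw [show (1:ℝ)-1 = 0 by ring, zero_pow (by omega : i ≠ 0)]
    ring
  have hFh : ∑ i ∈ Icc (j+1) (k+1), (Nat.choose (k+1) i : ℝ) * (((1/2:ℝ))^(k+1-i) * (1-(1/2:ℝ))^i)
      = (1/2:ℝ)^(k+1) * ∑ i ∈ Icc (j+1) (k+1), (Nat.choose (k+1) i : ℝ) := by
    rw [Finset.mul_sum]
    refine Finset.sum_congr rfl fun i hi => ?_
    simp only [mem_Icc] at hi
    rw [show (1:ℝ)-1/2 = 1/2 by ring, ← pow_add, show k+1-i+i = k+1 by omega]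
    ring
  have hint : ∫ t in (1/2:ℝ)..1, -(((k:ℝ)+1) * (Nat.choose k j : ℝ) * (t^(k-j) * (1-t)^j))
      = -(((k:ℝ)+1) * (Nat.choose k j : ℝ)) * Ikj k j := by
    rw [Ikj, ← intervalIntegral.integral_const_mul]
    congr 1
    ext t
    ring
  rw [hint, hF1, hFh] at hftc
  have hcomb : (∑ i ∈ Icc (j+1) (k+1), (Nat.choose (k+1) i : ℝ))
      = ∑ m ∈ Icc j k, (2:ℝ)^(k-m) * (Nat.choose m j : ℝ) := by
    have h3 := congrArg (Nat.cast : ℕ → ℝ) (comb_id j k hj)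
    push_cast at h3
    convert h3 using 2
  have hpow : (1/2:ℝ)^(k+1) * ∑ m ∈ Icc j k, (2:ℝ)^(k-m) * (Nat.choose m j : ℝ)
      = (∑ m ∈ Icc j k, (2:ℝ)⁻¹^m * (Nat.choose m j : ℝ)) / 2 := by
    rw [Finset.mul_sum, Finset.sum_div]
    refine Finset.sum_congr rfl fun m hm => ?_
    simp only [mem_Icc] at hm
    have hq : (1/2:ℝ)^(k+1) * (2:ℝ)^(k-m) = (2:ℝ)⁻¹^m / 2 := by
      rw [show k+1 = (k-m)+(m+1) by omega, pow_add]
      have h2 : ((1/2:ℝ)^(k-m) * (2:ℝ)^(k-m)) = 1 := by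
        rw [← mul_pow]; norm_num
      calc (1/2:ℝ)^(k-m) * (1/2:ℝ)^(m+1) * (2:ℝ)^(k-m)
          = ((1/2:ℝ)^(k-m) * (2:ℝ)^(k-m)) * (1/2:ℝ)^(m+1) := by ring
        _ = (1/2:ℝ)^(m+1) := by rw [h2]; ring
        _ = (2:ℝ)⁻¹^m / 2 := by rw [pow_succ]; norm_num; ring
    rw [← mul_assoc, hq]
    ring
  rw [hcomb, hpow] at hftc
  have hk1 : ((k:ℝ)+1) ≠ 0 := by positivity
  have : ((k:ℝ)+1) * ((Nat.choose k j : ℝ) * Ikj k j)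
      = (∑ m ∈ Icc j k, (2:ℝ)⁻¹^m * (Nat.choose m j : ℝ)) / 2 := by linarith [hftc]
  rw [eq_div_iff (by positivity : (2*((k:ℝ)+1)) ≠ 0)]
  linarith [this]

open Set

lemma coeff_zero_s19 (d : ℕ → ℝ)
    (hs : ∀ x ∈ Set.Ioo (0:ℝ) (1/2), Summable fun n => d n * x^n)
    (hz : ∀ x ∈ Set.Ioo (0:ℝ) (1/2), ∑' n, d n * x^n = 0) : d 0 = 0 := by
  have h4 : (1/4 : ℝ) ∈ Set.Ioo (0:ℝ) (1/2) := by norm_num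
  have hs4 : Summable fun n => |d n| * (1/4:ℝ)^n := by
    have := (summable_abs_iff.2 (hs _ h4))
    refine this.congr fun n => ?_
    rw [abs_mul, abs_pow]
    norm_num [abs_of_pos]
  set M : ℝ := ∑' n, |d n| * (1/4:ℝ)^n with hM
  have hM0 : 0 ≤ M := tsum_nonneg fun n => by positivity
  have hbd : ∀ n, |d n| * (1/4:ℝ)^n ≤ M := fun n =>
    Summable.le_tsum hs4 n fun m _ => by positivity
  have key : ∀ x : ℝ, x ∈ Set.Ioo (0:ℝ) (1/8) → |d 0| ≤ 8 * M * x := by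
    intro x hx
    obtain ⟨hx0, hx8⟩ := hx
    have hxI : x ∈ Set.Ioo (0:ℝ) (1/2) := ⟨hx0, by linarith⟩
    have hsx := hs x hxI
    have hzx := hz x hxI
    have hshift := Summable.tsum_eq_zero_add hsx
    rw [hzx] at hshift
    have hd0 : d 0 = -∑' n, d (n+1) * x^(n+1) := by
      simp only [pow_zero, mul_one] at hshift
      linarith [hshift]
    have habs : |∑' n, d (n+1) * x^(n+1)| ≤ ∑' n, |d (n+1) * x^(n+1)| := by
      have hsx1 : Summable fun n => d (n+1) * x^(n+1) :=
        (summable_nat_add_iff (f := fun n => d n * x^n) 1).2 hsx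
      calc |∑' n, d (n+1) * x^(n+1)| = ‖∑' n, d (n+1) * x^(n+1)‖ := (Real.norm_eq_abs _).symm
        _ ≤ ∑' n, ‖d (n+1) * x^(n+1)‖ :=
            norm_tsum_le_tsum_norm (by
              simpa only [Real.norm_eq_abs, abs_mul, abs_pow] using summable_abs_iff.2 hsx1)
        _ = ∑' n, |d (n+1) * x^(n+1)| := by
            simp only [Real.norm_eq_abs, abs_mul, abs_pow]
    have hcomp : ∑' n, |d (n+1) * x^(n+1)| ≤ ∑' n, M * (4*x)^(n+1) := by
      have hsl : Summable fun n => |d (n+1) * x^(n+1)| := by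
        have : Summable fun n => d (n+1) * x^(n+1) := (summable_nat_add_iff (f := fun n => d n * x^n) 1).2 hsx
        exact (summable_abs_iff.2 this)
      have hsr : Summable fun n => M * (4*x)^(n+1) := by
        refine Summable.mul_left _ ?_
        have hg : Summable fun n : ℕ => (4*x)^n :=
          summable_geometric_of_lt_one (by positivity) (by nlinarith)
        exact (summable_nat_add_iff 1).2 hg
      refine Summable.tsum_le_tsum (fun n => ?_) hsl hsr
      have : |d (n+1) * x^(n+1)| = (|d (n+1)| * (1/4)^(n+1)) * (4*x)^(n+1) := by
        rw [abs_mul, abs_pow, abs_of_pos hx0, mul_assoc, ← mul_pow,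
          show (1/4:ℝ)*(4*x) = x by ring]
      rw [this]
      have := hbd (n+1)
      have h4x : (0:ℝ) ≤ (4*x)^(n+1) := by positivity
      nlinarith [this, h4x]
    have hgeo : ∑' n : ℕ, M * (4*x)^(n+1) ≤ 8 * M * x := by
      have h1 : ∑' n : ℕ, M * (4*x)^(n+1) = M * (4*x) * ∑' n : ℕ, (4*x)^n := by
        rw [← tsum_mul_left]
        congr 1; ext n; rw [pow_succ]; ring
      rw [h1, tsum_geometric_of_lt_one (by positivity) (by nlinarith)]
      have hle : (1 - 4*x)⁻¹ ≤ 2 := by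
        rw [inv_le_comm₀ (by nlinarith) (by norm_num)]
        nlinarith
      have : M * (4*x) * (1-4*x)⁻¹ ≤ M * (4*x) * 2 := by
        apply mul_le_mul_of_nonneg_left hle (by positivity)
      linarith
    rw [hd0, abs_neg]
    calc |∑' n, d (n+1) * x^(n+1)| ≤ ∑' n, |d (n+1) * x^(n+1)| := habs
      _ ≤ ∑' n, M * (4*x)^(n+1) := hcomp
      _ ≤ 8 * M * x := hgeo
  have : ∀ ε > 0, |d 0| ≤ ε := by
    intro ε hε
    rcases le_or_gt (8*M) 0 with hM8 | hM8
    · have := key (1/16) (by norm_num)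
      have : |d 0| ≤ 0 := by nlinarith
      linarith [abs_nonneg (d 0), hε]
    · set x := min (1/16 : ℝ) (ε / (8*M)) with hx
      have hx0 : 0 < x := lt_min (by norm_num) (by positivity)
      have := key x ⟨hx0, lt_of_le_of_lt (min_le_left _ _) (by norm_num)⟩
      have hxε : 8 * M * x ≤ ε := by
        have : x ≤ ε / (8*M) := min_le_right _ _
        rw [le_div_iff₀ hM8] at this
        linarith
      linarith
  by_contra h
  have hpos : 0 < |d 0| := abs_pos.2 h
  have := this (|d 0|/2) (by positivity)
  linarith

lemma coeff_unique : ∀ (n : ℕ) (d : ℕ → ℝ),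
    (∀ x ∈ Set.Ioo (0:ℝ) (1/2), Summable fun n => d n * x^n) →
    (∀ x ∈ Set.Ioo (0:ℝ) (1/2), ∑' n, d n * x^n = 0) → d n = 0 := by
  intro n
  induction n with
  | zero => exact fun d hs hz => coeff_zero_s19 d hs hz
  | succ n ih =>
    intro d hs hz
    have hd0 : d 0 = 0 := coeff_zero_s19 d hs hz
    have hse : ∀ x ∈ Set.Ioo (0:ℝ) (1/2), Summable fun n => d (n+1) * x^n := by
      intro x hx
      have hx0 : x ≠ 0 := ne_of_gt hx.1
      have h1 : Summable fun n => d (n+1) * x^(n+1) :=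
        (summable_nat_add_iff (f := fun n => d n * x^n) 1).2 (hs x hx)
      have h2 := h1.mul_right x⁻¹
      refine h2.congr fun n => ?_
      rw [pow_succ]
      field_simp
    have hze : ∀ x ∈ Set.Ioo (0:ℝ) (1/2), ∑' n, d (n+1) * x^n = 0 := by
      intro x hx
      have hx0 : x ≠ 0 := ne_of_gt hx.1
      have hsx := hs x hx
      have hshift := Summable.tsum_eq_zero_add hsx
      rw [hz x hx, hd0] at hshift
      simp only [zero_mul, zero_add] at hshift
      have h1 : ∑' n, d (n+1) * x^(n+1) = x * ∑' n, d (n+1) * x^n := by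
        rw [← tsum_mul_left]
        congr 1; ext n; rw [pow_succ]; ring
      rw [h1] at hshift
      have := hshift.symm
      rcases mul_eq_zero.1 this with h | h
      · exact absurd h hx0
      · exact h
    exact ih (fun n => d (n+1)) hse hze


lemma integral_pow_expand (x : ℝ) (k : ℕ) :
    ∫ r in (1/2:ℝ)..1, (r*x + (1-r)*x^2)^k
      = ∑ j ∈ Finset.range (k+1), (Nat.choose k j : ℝ) * Ikj k j * x^(k+j) := by
  have h1 : (fun r : ℝ => (r*x + (1-r)*x^2)^k)
      = fun r : ℝ => ∑ i ∈ Finset.range (k+1),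
        (fun r : ℝ => (r^i * (1-r)^(k-i)) * (x^i * (x^2)^(k-i) * (Nat.choose k i : ℝ))) r := by
    ext r
    rw [add_pow]
    refine Finset.sum_congr rfl fun i hi => ?_
    rw [mul_pow, mul_pow]
    ring
  rw [h1, intervalIntegral.integral_finset_sum (fun i _ => (Continuous.intervalIntegrable (by continuity) _ _))]
  have h2 : ∀ i ∈ Finset.range (k+1),
      (∫ r in (1/2:ℝ)..1, (r^i * (1-r)^(k-i)) * (x^i * (x^2)^(k-i) * (Nat.choose k i : ℝ)))
      = (fun j => (Nat.choose k j : ℝ) * Ikj k j * x^(k+j)) (k-i) := by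
    intro i hi
    simp only [Finset.mem_range] at hi
    rw [intervalIntegral.integral_mul_const]
    simp only
    rw [show Ikj k (k-i) = ∫ r in (1/2:ℝ)..1, r^i * (1-r)^(k-i) by
      rw [Ikj, show k-(k-i) = i by omega]]
    rw [Nat.choose_symm (show i ≤ k by omega)]
    rw [← pow_mul, ← pow_add, show i + 2*(k-i) = k + (k-i) by omega]
    ring
  rw [Finset.sum_congr rfl h2]
  have hre := Finset.sum_range_reflect (fun j => (Nat.choose k j : ℝ) * Ikj k j * x^(k+j)) (k+1)
  simp only [Nat.add_sub_cancel] at hre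
  exact hre

open MeasureTheory in
lemma swap_int (φ : ℕ → ℝ)
    (hconv : ∀ x ∈ Set.Ioo (0 : ℝ) 1, Summable fun n => φ n * x ^ n)
    (x : ℝ) (hx : x ∈ Set.Ioo (0:ℝ) 1) :
    ∫ r in (1/2 : ℝ)..1, (∑' n, φ n * (r * x + (1 - r) * x ^ 2) ^ n)
      = ∑' k, φ k * ∫ r in (1/2 : ℝ)..1, (r * x + (1 - r) * x ^ 2) ^ k := by
  obtain ⟨hx0, hx1⟩ := hx
  have hy : ∀ r ∈ Set.Ioc (1/2:ℝ) 1, 0 ≤ r * x + (1 - r) * x ^ 2 ∧ r * x + (1 - r) * x ^ 2 ≤ x := by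
    intro r hr
    obtain ⟨hr1, hr2⟩ := hr
    constructor
    · nlinarith
    · nlinarith [mul_nonneg (mul_nonneg (by linarith : (0:ℝ) ≤ 1-r) hx0.le)
        (by linarith : (0:ℝ) ≤ 1-x)]
  have hmeas : ∀ k : ℕ, AEStronglyMeasurable
      (fun r : ℝ => φ k * (r * x + (1 - r) * x ^ 2) ^ k)
      (volume.restrict (Set.Ioc (1/2:ℝ) 1)) := by
    intro k
    exact (Continuous.aestronglyMeasurable (by continuity))
  have hsum : Summable fun k => ‖φ k * x ^ k‖₊ := by
    rw [← NNReal.summable_coe]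
    have : Summable fun k => |φ k * x ^ k| := summable_abs_iff.2 (hconv x ⟨hx0, hx1⟩)
    refine this.congr fun k => ?_
    rw [coe_nnnorm, Real.norm_eq_abs]
  have hfin : ∑' k, ∫⁻ r in Set.Ioc (1/2:ℝ) 1, ‖φ k * (r * x + (1 - r) * x ^ 2) ^ k‖₊ ≠ ⊤ := by
    have hb : ∀ k : ℕ, ∫⁻ r in Set.Ioc (1/2:ℝ) 1, ‖φ k * (r * x + (1 - r) * x ^ 2) ^ k‖₊
        ≤ (‖φ k * x ^ k‖₊ : ENNReal) := by
      intro k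
      have h1 : ∫⁻ r in Set.Ioc (1/2:ℝ) 1, (‖φ k * (r * x + (1 - r) * x ^ 2) ^ k‖₊ : ENNReal)
          ≤ ∫⁻ _ in Set.Ioc (1/2:ℝ) 1, (‖φ k * x ^ k‖₊ : ENNReal) := by
        refine MeasureTheory.setLIntegral_mono measurable_const fun r hr => ?_
        obtain ⟨h0, h1⟩ := hy r hr
        rw [ENNReal.coe_le_coe, ← NNReal.coe_le_coe, coe_nnnorm, coe_nnnorm,
          Real.norm_eq_abs, Real.norm_eq_abs, abs_mul, abs_mul]
        refine mul_le_mul_of_nonneg_left ?_ (abs_nonneg _)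
        rw [abs_pow, abs_pow, abs_of_nonneg h0, abs_of_pos hx0]
        exact pow_le_pow_left₀ h0 h1 k
      refine h1.trans ?_
      rw [MeasureTheory.setLIntegral_const]
      nth_rewrite 2 [← mul_one ((‖φ k * x ^ k‖₊ : ENNReal))]
      refine mul_le_mul_right ?_ _
      rw [Real.volume_Ioc]
      refine (ENNReal.ofReal_le_one).2 (by norm_num)
    refine ne_top_of_le_ne_top ?_ (ENNReal.tsum_le_tsum hb)
    exact ENNReal.tsum_coe_ne_top_iff_summable.2 hsum
  rw [intervalIntegral.integral_of_le (by norm_num : (1/2:ℝ) ≤ 1)]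
  rw [MeasureTheory.integral_tsum hmeas hfin]
  refine tsum_congr fun k => ?_
  rw [MeasureTheory.integral_const_mul, ← intervalIntegral.integral_of_le (by norm_num : (1/2:ℝ) ≤ 1)]

noncomputable def bb (φ : ℕ → ℝ) (n : ℕ) : ℝ :=
  ∑ j ∈ Finset.range (n/2+1), φ (n-j) * (Nat.choose (n-j) j : ℝ) * Ikj (n-j) j

lemma Ikj_abs_le (k j : ℕ) : |Ikj k j| ≤ 1/2 := by
  have hb : ∀ r ∈ Set.uIoc (1/2:ℝ) 1, ‖r^(k-j) * (1-r)^j‖ ≤ 1 := by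
    intro r hr
    rw [Set.uIoc_of_le (by norm_num : (1/2:ℝ) ≤ 1)] at hr
    obtain ⟨h1, h2⟩ := hr
    rw [Real.norm_eq_abs, abs_mul, abs_pow, abs_pow]
    have ha : |r| ≤ 1 := by rw [abs_le]; constructor <;> linarith
    have hb' : |1-r| ≤ 1 := by rw [abs_le]; constructor <;> linarith
    calc |r|^(k-j) * |1-r|^j ≤ 1^(k-j) * 1^j := by
          exact mul_le_mul (pow_le_pow_left₀ (abs_nonneg _) ha _)
            (pow_le_pow_left₀ (abs_nonneg _) hb' _) (by positivity) (by norm_num)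
      _ = 1 := by norm_num
  have := intervalIntegral.norm_integral_le_of_norm_le_const hb
  rw [Real.norm_eq_abs] at this
  calc |Ikj k j| ≤ 1 * |1 - 1/2| := this
    _ = 1/2 := by norm_num

lemma regroup (φ : ℕ → ℝ)
    (hconv : ∀ x ∈ Set.Ioo (0 : ℝ) 1, Summable fun n => φ n * x ^ n)
    (x : ℝ) (hx : x ∈ Set.Ioo (0:ℝ) (1/2)) :
    Summable (fun n => bb φ n * x^n) ∧
    ∑' k, φ k * (∑ j ∈ Finset.range (k+1), (Nat.choose k j : ℝ) * Ikj k j * x^(k+j))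
      = ∑' n, bb φ n * x^n := by
  obtain ⟨hx0, hx2⟩ := hx
  set g : ℕ × ℕ → ℝ := fun p => φ p.1 * (Nat.choose p.1 p.2 : ℝ) * Ikj p.1 p.2 * x^(p.1+p.2)
    with hgdef
  set h : ℕ × ℕ → ℝ := fun q => φ (q.1 - q.2) * (Nat.choose (q.1-q.2) q.2 : ℝ)
    * Ikj (q.1-q.2) q.2 * x^q.1 with hhdef
  -- off-diagonal vanishing
  have hg0 : ∀ p : ℕ × ℕ, p.1 < p.2 → g p = 0 := by
    intro p hp
    simp [hgdef, Nat.choose_eq_zero_of_lt hp]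
  have hh0 : ∀ q : ℕ × ℕ, q.1 < q.2 → h q = 0 := by
    intro q hq
    have : q.1 - q.2 < q.2 := by omega
    simp [hhdef, Nat.choose_eq_zero_of_lt this]
  -- row summability of |g|
  have hrowg : ∀ k, Summable fun j => |g (k, j)| := by
    intro k
    refine summable_of_ne_finset_zero (s := Finset.range (k+1)) fun j hj => ?_
    simp only [Finset.mem_range] at hj
    rw [hg0 (k, j) (by omega), abs_zero]
  -- majorant
  set t : ℝ := x + x^2 with htdef
  have ht : t ∈ Set.Ioo (0:ℝ) 1 := by constructor <;> nlinarith
  have hmaj : Summable fun k => (1/2) * (|φ k| * t^k) := by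
    refine Summable.mul_left _ ?_
    have := summable_abs_iff.2 (hconv t ht)
    refine this.congr fun k => ?_
    rw [abs_mul, abs_pow, abs_of_pos ht.1]
  have hrowbound : ∀ k, ∑' j, |g (k, j)| ≤ (1/2) * (|φ k| * t^k) := by
    intro k
    rw [tsum_eq_sum (s := Finset.range (k+1)) fun j hj => by
      simp only [Finset.mem_range] at hj
      rw [hg0 (k, j) (by omega), abs_zero]]
    have hterm : ∀ j ∈ Finset.range (k+1),
        |g (k, j)| ≤ (1/2) * (|φ k| * ((Nat.choose k j : ℝ) * (x^k * x^j))) := by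
      intro j hj
      simp only [hgdef, abs_mul]
      rw [abs_pow, abs_of_pos hx0, pow_add]
      have h1 : |(Nat.choose k j : ℝ)| = (Nat.choose k j : ℝ) := abs_of_nonneg (by positivity)
      rw [h1]
      have h2 := Ikj_abs_le k j
      have h3 : (0:ℝ) ≤ |φ k| * (Nat.choose k j : ℝ) := by positivity
      have h4 : (0:ℝ) ≤ x^k * x^j := by positivity
      calc |φ k| * ↑(Nat.choose k j) * |Ikj k j| * (x^k * x^j)
          ≤ |φ k| * ↑(Nat.choose k j) * (1/2) * (x^k * x^j) := by
            refine mul_le_mul_of_nonneg_right (mul_le_mul_of_nonneg_left h2 h3) h4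
        _ = (1/2) * (|φ k| * ((Nat.choose k j : ℝ) * (x^k * x^j))) := by ring
    refine (Finset.sum_le_sum hterm).trans ?_
    have hbinom : ∑ j ∈ Finset.range (k+1), (Nat.choose k j : ℝ) * x^j = (x+1)^k := by
      rw [add_pow]
      refine Finset.sum_congr rfl fun j hj => ?_
      simp [mul_comm]
    have : ∑ j ∈ Finset.range (k+1), (1/2) * (|φ k| * ((Nat.choose k j : ℝ) * (x^k * x^j)))
        = (1/2) * (|φ k| * (x^k * (x+1)^k)) := by
      rw [← hbinom, Finset.mul_sum, Finset.mul_sum, Finset.mul_sum]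
      refine Finset.sum_congr rfl fun j hj => by ring
    rw [this, ← mul_pow]
    have : x * (x+1) = t := by rw [htdef]; ring
    rw [this]
  -- summability of |g| and g
  have habsg : Summable fun p : ℕ × ℕ => |g p| := by
    rw [summable_prod_of_nonneg (fun p => abs_nonneg _)]
    refine ⟨hrowg, ?_⟩
    refine Summable.of_nonneg_of_le (fun k => tsum_nonneg fun j => abs_nonneg _) hrowbound hmaj
  have hgsum : Summable g := habsg.of_abs
  -- injection
  set e : ℕ × ℕ → ℕ × ℕ := fun p => (p.1 + p.2, p.2) with hedef
  have hinj : Function.Injective e := by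
    intro p q hpq
    simp only [hedef, Prod.mk.injEq] at hpq
    obtain ⟨h1, h2⟩ := hpq
    exact Prod.ext (by omega) h2
  have hcomp : h ∘ e = g := by
    ext p
    simp only [Function.comp, hedef, hhdef, hgdef, Nat.add_sub_cancel]
  have hvanish : ∀ q : ℕ × ℕ, q ∉ Set.range e → h q = 0 := by
    intro q hq
    refine hh0 q ?_
    by_contra hle
    push_neg at hle
    exact hq ⟨(q.1 - q.2, q.2), Prod.ext (by show q.1 - q.2 + q.2 = q.1; omega) rfl⟩
  have hsupp : Function.support h ⊆ Set.range e := Function.support_subset_iff'.2 hvanish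
  have hhsum : Summable h := by
    refine (hinj.summable_iff hvanish).1 ?_
    exact hgsum.congr fun p => (congrFun hcomp p).symm
  have habsh : Summable fun q : ℕ × ℕ => |h q| := by
    refine (hinj.summable_iff (fun q hq => by rw [hvanish q hq, abs_zero])).1 ?_
    refine habsg.congr fun p => ?_
    simp only [Function.comp]
    rw [← congrFun hcomp p]
    rfl
  -- chain of equalities
  have E1 : ∀ k : ℕ, φ k * (∑ j ∈ Finset.range (k+1), (Nat.choose k j : ℝ) * Ikj k j * x^(k+j))
      = ∑' j, g (k, j) := by
    intro k
    rw [tsum_eq_sum (s := Finset.range (k+1)) fun j hj => by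
      simp only [Finset.mem_range] at hj
      exact hg0 (k, j) (by omega)]
    rw [Finset.mul_sum]
    refine Finset.sum_congr rfl fun j hj => by simp only [hgdef]; ring
  have E2 : ∑' k, ∑' j, g (k, j) = ∑' p : ℕ × ℕ, g p :=
    (Summable.tsum_prod' hgsum fun k => (hrowg k).of_abs).symm
  have E3 : ∑' p : ℕ × ℕ, g p = ∑' q : ℕ × ℕ, h q := by
    rw [← hinj.tsum_eq hsupp]
    exact tsum_congr fun p => (congrFun hcomp p).symm
  have hrowh : ∀ n, Summable fun j => h (n, j) := by
    intro n
    refine summable_of_ne_finset_zero (s := Finset.range (n+1)) fun j hj => ?_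
    simp only [Finset.mem_range] at hj
    exact hh0 (n, j) (by omega)
  have E4 : ∑' q : ℕ × ℕ, h q = ∑' n, bb φ n * x^n := by
    rw [Summable.tsum_prod' hhsum hrowh]
    refine tsum_congr fun n => ?_
    rw [tsum_eq_sum (s := Finset.range (n/2+1)) fun j hj => by
      simp only [Finset.mem_range] at hj
      rcases Nat.lt_or_ge n j with hc | hc
      · exact hh0 (n, j) hc
      · have : n - j < j := by omega
        simp [hhdef, Nat.choose_eq_zero_of_lt this]]
    rw [bb, Finset.sum_mul]
  -- summability of row sums of h
  have hsummb : Summable (fun n => bb φ n * x^n) := by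
    have hrs := ((summable_prod_of_nonneg (fun q => abs_nonneg (h q))).1 habsh).2
    refine Summable.of_abs (Summable.of_nonneg_of_le (fun n => abs_nonneg _) (fun n => ?_) hrs)
    have : bb φ n * x^n = ∑' j, h (n, j) := by
      rw [tsum_eq_sum (s := Finset.range (n/2+1)) fun j hj => by
        simp only [Finset.mem_range] at hj
        rcases Nat.lt_or_ge n j with hc | hc
        · exact hh0 (n, j) hc
        · have : n - j < j := by omega
          simp [hhdef, Nat.choose_eq_zero_of_lt this]]
      rw [bb, Finset.sum_mul]
    rw [this]
    have := (hrowh n)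
    calc |∑' j, h (n, j)| = ‖∑' j, h (n, j)‖ := (Real.norm_eq_abs _).symm
      _ ≤ ∑' j, ‖h (n, j)‖ := norm_tsum_le_tsum_norm (by
          simpa only [Real.norm_eq_abs] using habsh.prod_factor n)
      _ = ∑' j, |h (n, j)| := by simp only [Real.norm_eq_abs]
  refine ⟨hsummb, ?_⟩
  rw [tsum_congr E1, E2, E3, E4]

theorem stmt_19
    (φ : ℕ → ℝ) (hφ0 : φ 0 = 0)
    (hconv : ∀ x ∈ Set.Ioo (0 : ℝ) 1, Summable fun n => φ n * x ^ n)
    (heq : ∀ x ∈ Set.Ioo (0 : ℝ) 1,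
      ∫ r in (1/2 : ℝ)..1, (∑' n, φ n * (r * x + (1 - r) * x ^ 2) ^ n) =
        (3/8) * ∑' n, φ n * x ^ n) :
    ∀ n : ℕ, 2 ≤ n →
      (3/8 - (1 - ((2 : ℝ))⁻¹ ^ (n + 1)) / ((n : ℝ) + 1)) * φ n =
        ∑ j ∈ Finset.Icc 1 (n / 2),
          (φ (n - j) / (2 * ((n : ℝ) - (j : ℝ) + 1))) *
            (∑ m ∈ Finset.Icc j (n - j), ((2 : ℝ))⁻¹ ^ m * (Nat.choose m j : ℝ)) := by
  have hsubset : ∀ x : ℝ, x ∈ Set.Ioo (0:ℝ) (1/2) → x ∈ Set.Ioo (0:ℝ) 1 := by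
    intro x hx
    exact ⟨hx.1, by linarith [hx.2]⟩
  set d : ℕ → ℝ := fun n => bb φ n - (3/8) * φ n with hd
  have hds : ∀ x ∈ Set.Ioo (0:ℝ) (1/2), Summable fun n => d n * x^n := by
    intro x hx
    have h1 := (regroup φ hconv x hx).1
    have h2 := (hconv x (hsubset x hx)).mul_left (3/8)
    refine ((h1.sub h2).congr fun n => ?_)
    simp only [hd]
    ring
  have hdz : ∀ x ∈ Set.Ioo (0:ℝ) (1/2), ∑' n, d n * x^n = 0 := by
    intro x hx
    have hx1 := hsubset x hx
    have e1 := heq x hx1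
    have e2 := swap_int φ hconv x hx1
    have e4 := (regroup φ hconv x hx).2
    have e3 : ∑' k, φ k * ∫ r in (1/2:ℝ)..1, (r * x + (1 - r) * x ^ 2) ^ k
        = ∑' k, φ k * (∑ j ∈ Finset.range (k+1), (Nat.choose k j : ℝ) * Ikj k j * x^(k+j)) := by
      refine tsum_congr fun k => ?_
      rw [integral_pow_expand]
    have key : ∑' n, bb φ n * x^n = (3/8) * ∑' n, φ n * x^n := by
      rw [← e4, ← e3, ← e2, e1]
    have h1 := (regroup φ hconv x hx).1
    have h2 := (hconv x hx1).mul_left (3/8)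
    have : ∑' n, d n * x^n = ∑' n, (bb φ n * x^n - (3/8) * (φ n * x^n)) := by
      refine tsum_congr fun n => ?_
      simp only [hd]
      ring
    rw [this, Summable.tsum_sub h1 h2, tsum_mul_left, key]
    ring
  have hbz : ∀ m, bb φ m = (3/8) * φ m := by
    intro m
    have := coeff_unique m d hds hdz
    simp only [hd] at this
    linarith
  intro n hn
  have hb := hbz n
  rw [bb] at hb
  have hsplit : Finset.range (n/2+1) = insert 0 (Finset.Icc 1 (n/2)) := by
    ext j
    simp only [Finset.mem_range, Finset.mem_insert, Finset.mem_Icc]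
    omega
  rw [hsplit, Finset.sum_insert (by simp)] at hb
  have hI0 : Ikj n 0 = (1 - (2:ℝ)⁻¹^(n+1)) / ((n:ℝ)+1) := by
    rw [Ikj]
    simp only [Nat.sub_zero, pow_zero, mul_one]
    rw [integral_pow]
    norm_num
  have hterm : ∀ j ∈ Finset.Icc 1 (n/2),
      φ (n-j) * (Nat.choose (n-j) j : ℝ) * Ikj (n-j) j
        = (φ (n - j) / (2 * ((n : ℝ) - (j : ℝ) + 1))) *
            (∑ m ∈ Finset.Icc j (n - j), ((2 : ℝ))⁻¹ ^ m * (Nat.choose m j : ℝ)) := by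
    intro j hj
    simp only [Finset.mem_Icc] at hj
    have hjn : j ≤ n - j := by omega
    have hk := keyK (n-j) j hjn
    have hcast : ((n-j : ℕ) : ℝ) = (n:ℝ) - (j:ℝ) := by
      push_cast [Nat.cast_sub (by omega : j ≤ n)]
      ring
    rw [hcast] at hk
    rw [mul_assoc, hk]
    field_simp
  rw [Finset.sum_congr rfl hterm] at hb
  simp only [Nat.sub_zero, Nat.choose_zero_right, Nat.cast_one, mul_one] at hb
  rw [hI0] at hb
  linarith [hb]
end
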